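/- arXiv:2303.12240 — 3 statements merged into one kernel-verified Lean document; each statement's English description precedes it below -/
import Mathlib

section
/- For every noncrossing partition P of [n] and every i, the partition κ^{2i}(P) is the rotation of P by i: j belongs to a block B of P if and only if j - i (mod n) belongs to the corresponding block of κ^{2i}(P). -/
/-- A partition of `{1,…,n}` (as `Fin n`) is noncrossing if there are no
`a < b < c < d` with `a, c` in one block and `b, d` in a different block. -/
def IsNoncrossing {n : ℕ} (P : Finpartition (Finset.univ : Finset (Fin n))) : Prop :=
  ¬ ∃ a b c d : Fin n, a < b ∧ b < c ∧ c < d ∧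
    P.part a = P.part c ∧ P.part b = P.part d ∧ P.part a ≠ P.part b

/-- The set `NC(n)` of noncrossing partitions of `{1,…,n}`. -/
abbrev NCP (n : ℕ) := {P : Finpartition (Finset.univ : Finset (Fin n)) // IsNoncrossing P}

/-- In the interleaved order `1 < 1' < 2 < 2' < … < n < n'` (element `i` of the
first copy sits at position `2i`, of the second copy at position `2i+1`),
positions `x` and `y` lie in the same block of the union `P ∪ Q`, where `P`
lives on the first copy and `Q` on the second. -/
def JointSame {n : ℕ} (P Q : Finpartition (Finset.univ : Finset (Fin n))) (x y : ℕ) : Prop :=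
  ∃ i j : Fin n,
    (x = 2 * i.val ∧ y = 2 * j.val ∧ P.part i = P.part j) ∨
    (x = 2 * i.val + 1 ∧ y = 2 * j.val + 1 ∧ Q.part i = Q.part j)

/-- `P ∪ Q` is a noncrossing partition of the interleaved totally ordered set. -/
def JointNoncrossing {n : ℕ} (P Q : Finpartition (Finset.univ : Finset (Fin n))) : Prop :=
  ¬ ∃ a b c d : ℕ, a < b ∧ b < c ∧ c < d ∧
    JointSame P Q a c ∧ JointSame P Q b d ∧ ¬ JointSame P Q a b

/-- `k` is the Kreweras complementation map on `NC(n)`: `k P` is the coarsest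
noncrossing partition on the second copy of `{1,…,n}` such that `P ∪ k P` is
noncrossing on the interleaved set. -/
def IsKreweras {n : ℕ} (k : NCP n → NCP n) : Prop :=
  ∀ P : NCP n, JointNoncrossing P.1 (k P).1 ∧
    ∀ Q : NCP n, JointNoncrossing P.1 Q.1 → Q.1 ≤ (k P).1

/-!
The Kreweras complement `κ(P)` of a noncrossing `P` joins `a` and `b` exactly when the cuts just
after `a` and just after `b` separate the same pairs of `P`-related points (`KrewerasRel`; for
`a ≤ b`: when `(a, b]` is a union of blocks of `P`). Indeed this equivalence is noncrossing and
compatible with `P`, and every partition compatible with `P` refines it.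

Hence `a < b` lie in one block of `κ²(P)` iff no block of `κ(P)` straddles `(a, b]`. This holds
when `a + 1` and `b + 1` (mod `n`) lie in one block of `P`, since every `κ(P)`-pair cuts
`{a + 1, b + 1}` as `a` and `b` cut that pair. Otherwise let `f` be the first element after `a`
of the block of `b + 1`: then `f - 1` and the cyclic predecessor of `f` in its block form a
`κ(P)`-pair straddling `(a, b]`. So `κ²` is the rotation by one step.
-/

open Finset

theorem Finpartition.part_eq_part_of_le {α : Type*} [DecidableEq α] {s : Finset α}
    {P Q : Finpartition s} (h : P ≤ Q) {a b : α} (hb : b ∈ s) (hab : P.part a = P.part b) :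
    Q.part a = Q.part b := by
  have ha : a ∈ s := P.part_nonempty.1 (hab ▸ ⟨b, P.mem_part hb⟩)
  obtain ⟨c, hc, hsub⟩ := h (P.part_mem.2 hb)
  rw [Q.part_eq_of_mem hc (hsub ((P.mem_part_iff_part_eq_part ha hb).2 hab)),
    Q.part_eq_of_mem hc (hsub (P.mem_part hb))]

section KrewerasRel

variable {α : Type*} [LinearOrder α]

def KrewerasRel (r : α → α → Prop) (a b : α) : Prop :=
  ∀ ⦃u v⦄, r u v → ((u ≤ a ↔ v ≤ a) ↔ (u ≤ b ↔ v ≤ b))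

theorem krewerasRel_equivalence (r : α → α → Prop) : Equivalence (KrewerasRel r) where
  refl _ _ _ _ := Iff.rfl
  symm h _ _ huv := (h huv).symm
  trans h h' _ _ huv := (h huv).trans (h' huv)

theorem KrewerasRel.of_interleave {r : α → α → Prop} {a b c d : α} (hab : a ≤ b) (hbc : b ≤ c)
    (hcd : c ≤ d) (hac : KrewerasRel r a c) (hbd : KrewerasRel r b d) : KrewerasRel r a b := by
  intro u v huv
  have := hac huv
  have := hbd huv
  grind

end KrewerasRel

section Noncrossing

variable {n : ℕ}

theorem IsNoncrossing.part_eq {P : Finpartition (univ : Finset (Fin n))} (hP : IsNoncrossing P)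
    {a b c d : Fin n} (hab : a < b) (hbc : b < c) (hcd : c < d) (hac : P.part a = P.part c)
    (hbd : P.part b = P.part d) : P.part a = P.part b :=
  of_not_not fun hne => hP ⟨a, b, c, d, hab, hbc, hcd, hac, hbd, hne⟩

theorem IsNoncrossing.mem_Ioo_of_part_eq {P : Finpartition (univ : Finset (Fin n))}
    (hP : IsNoncrossing P) {e f u v : Fin n} (hef : P.part e = P.part f) (hu : u ∈ Set.Ioo e f)
    (hue : P.part u ≠ P.part e) (huv : P.part u = P.part v) : v ∈ Set.Ioo e f := by
  obtain ⟨heu, huf⟩ := hu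
  refine ⟨lt_of_not_ge fun hve => ?_, lt_of_not_ge fun hfv => ?_⟩
  · rcases hve.lt_or_eq with hve | rfl
    · exact hue (huv.trans (hP.part_eq hve heu huf huv.symm hef))
    · exact hue huv
  · rcases hfv.lt_or_eq with hfv | rfl
    · exact hue (hP.part_eq heu huf hfv hef huv).symm
    · exact hue (huv.trans hef.symm)

variable {P : Finpartition (univ : Finset (Fin (n + 1)))}

theorem IsNoncrossing.krewerasRel_sub_one_of_gap (hP : IsNoncrossing P) {e f : Fin (n + 1)}
    (hef : e < f) (hpart : P.part e = P.part f)
    (hgap : ∀ w, e < w → w < f → P.part w ≠ P.part e) :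
    KrewerasRel (fun u v => P.part u = P.part v) e (f - 1) := by
  have hIoo {u v} (huv : P.part u = P.part v) (hu : u ∈ Set.Ioo e f) : v ∈ Set.Ioo e f :=
    hP.mem_Ioo_of_part_eq hpart hu (hgap u hu.1 hu.2) huv
  intro u v huv
  have h₁ := hIoo huv
  have h₂ := hIoo huv.symm
  have hf := Fin.val_sub_one_of_ne_zero (ne_bot_of_gt hef)
  simp only [Set.mem_Ioo] at h₁ h₂
  omega

theorem IsNoncrossing.krewerasRel_sub_one_of_hull (hP : IsNoncrossing P) {m M : Fin (n + 1)}
    (hM : P.part M = P.part m) (hmin : ∀ w, P.part w = P.part m → m ≤ w)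
    (hmax : ∀ w, P.part w = P.part m → w ≤ M) :
    KrewerasRel (fun u v => P.part u = P.part v) (m - 1) M := by
  have hIcc {u v} (huv : P.part u = P.part v) (hu : u ∈ Set.Icc m M) : v ∈ Set.Icc m M := by
    by_cases hum : P.part u = P.part m
    · exact ⟨hmin v (huv ▸ hum), hmax v (huv ▸ hum)⟩
    · have hu' : u ∈ Set.Ioo m M :=
        ⟨hu.1.lt_of_ne (by rintro rfl; exact hum rfl), hu.2.lt_of_ne (by rintro rfl; exact hum hM)⟩
      exact Set.Ioo_subset_Icc_self (hP.mem_Ioo_of_part_eq hM.symm hu' hum huv)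
  intro u v huv
  have h₁ := hIcc huv
  have h₂ := hIcc huv.symm
  simp only [Set.mem_Icc] at h₁ h₂
  have hm := Fin.coe_sub_one m
  have := hmin M hM
  have := u.is_le
  have := v.is_le
  simp only [Fin.le_def, Fin.ext_iff, Fin.val_zero] at *
  split_ifs at hm <;> rw [hm] <;> omega

/-- `v` is the cyclic predecessor of `f` in its block. -/
theorem IsNoncrossing.exists_krewerasRel_pred (hP : IsNoncrossing P) (f : Fin (n + 1)) :
    ∃ v, P.part v = P.part f ∧ KrewerasRel (fun u v => P.part u = P.part v) (f - 1) v ∧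
      (v < f ∨ ∀ w, P.part w = P.part f → f ≤ w ∧ w ≤ v) := by
  by_cases hbelow : ∃ w, w < f ∧ P.part w = P.part f
  · obtain ⟨e, ⟨hef, he⟩, hemax⟩ :=
      Set.exists_max_image {w | w < f ∧ P.part w = P.part f} id (Set.toFinite _) hbelow
    have hgap : ∀ w, e < w → w < f → P.part w ≠ P.part e := fun w hew hwf hwe =>
      (hemax w ⟨hwf, hwe.trans he⟩).not_gt hew
    exact ⟨e, he, (krewerasRel_equivalence _).symm (hP.krewerasRel_sub_one_of_gap hef he hgap),
      Or.inl hef⟩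
  · push Not at hbelow
    have hmin : ∀ w, P.part w = P.part f → f ≤ w := fun w hw => le_of_not_gt (hbelow w · hw)
    obtain ⟨M, hM, hMmax⟩ :=
      Set.exists_max_image {w | P.part w = P.part f} id (Set.toFinite _) ⟨f, rfl⟩
    exact ⟨M, hM, hP.krewerasRel_sub_one_of_hull hM hmin hMmax,
      Or.inr fun w hw => ⟨hmin w hw, hMmax w hw⟩⟩

theorem IsNoncrossing.exists_krewerasRel_straddling (hP : IsNoncrossing P) {a b : Fin (n + 1)}
    (hab : a < b) (hne : P.part (a + 1) ≠ P.part (b + 1)) :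
    ∃ u v, KrewerasRel (fun u v => P.part u = P.part v) u v ∧ a < u ∧ u ≤ b ∧ (v ≤ a ∨ b < v) := by
  obtain ⟨c, rfl⟩ : ∃ c, b = c - 1 := ⟨b + 1, (add_sub_cancel_right b 1).symm⟩
  rw [sub_add_cancel] at hne
  have ha : ((a + 1 : Fin (n + 1)) : ℕ) = a + 1 :=
    Fin.val_add_one_of_lt (hab.trans_le (Fin.le_last _))
  have hc : ((c - 1 : Fin (n + 1)) : ℕ) = if c = 0 then n else c - 1 := Fin.coe_sub_one c
  simp only [Fin.ext_iff, Fin.val_zero] at ha hc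
  by_cases habove : ∃ w, a < w ∧ P.part w = P.part c
  · obtain ⟨f, ⟨haf, hfc⟩, hfmin⟩ :=
      Set.exists_min_image {w | a < w ∧ P.part w = P.part c} id (Set.toFinite _) habove
    have haf' : a + 1 ≠ f := fun h => hne (h ▸ hfc)
    have hfc_le : a < c → f ≤ c := fun hac => hfmin c ⟨hac, rfl⟩
    have hf := Fin.val_sub_one_of_ne_zero (ne_bot_of_gt haf)
    obtain ⟨v, hv, hKv, hvf | hvmax⟩ := hP.exists_krewerasRel_pred f
    · have hva : v ≤ a := le_of_not_gt fun hav => (hfmin v ⟨hav, hv.trans hfc⟩).not_gt hvf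
      refine ⟨f - 1, v, hKv, ?_, ?_, Or.inl hva⟩
      all_goals
        simp only [Fin.lt_def, Fin.le_def] at hfc_le haf haf' ⊢
        split_ifs at hc <;> omega
    · obtain ⟨hfc', hcv⟩ := hvmax c hfc.symm
      refine ⟨f - 1, v, hKv, ?_, ?_, Or.inr ?_⟩
      all_goals
        simp only [Fin.lt_def, Fin.le_def] at hfc' hcv haf haf' ⊢
        split_ifs at hc <;> omega
  · push Not at habove
    obtain ⟨v, hv, hKv, -⟩ := hP.exists_krewerasRel_pred c
    exact ⟨c - 1, v, hKv, hab, le_rfl, Or.inl (le_of_not_gt (habove v · hv))⟩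

/-- The pair `(a + 1, b + 1)` is cut by the points `u` and `v` exactly as the pair `(u, v)` is cut
by `a` and `b`. -/
theorem krewerasRel_krewerasRel_of_rel {r : Fin (n + 1) → Fin (n + 1) → Prop} {a b : Fin (n + 1)}
    (hab : a < b) (h : r (a + 1) (b + 1)) : KrewerasRel (KrewerasRel r) a b := by
  intro u v huv
  have := huv h
  have ha : ((a + 1 : Fin (n + 1)) : ℕ) = a + 1 := Fin.val_add_one_of_lt (hab.trans_le b.le_last)
  have hb : ((b + 1 : Fin (n + 1)) : ℕ) = if b = Fin.last n then 0 else (b : ℕ) + 1 :=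
    Fin.val_add_one b
  simp only [Fin.ext_iff, Fin.val_last, Fin.le_def, Fin.lt_def] at *
  split_ifs at hb <;> omega

theorem IsNoncrossing.krewerasRel_krewerasRel_iff (hP : IsNoncrossing P) (a b : Fin (n + 1)) :
    KrewerasRel (KrewerasRel fun u v => P.part u = P.part v) a b ↔
      P.part (a + 1) = P.part (b + 1) := by
  have hK := krewerasRel_equivalence (KrewerasRel fun u v => P.part u = P.part v)
  wlog hab : a ≤ b generalizing a b
  · exact (Iff.intro hK.symm hK.symm).trans ((this b a (le_of_not_ge hab)).trans eq_comm)
  rcases hab.lt_or_eq with hab | rfl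
  · refine ⟨fun h => by_contra fun hne => ?_,
      krewerasRel_krewerasRel_of_rel (r := fun u v => P.part u = P.part v) hab⟩
    obtain ⟨u, v, huv, hau, hub, hv⟩ := hP.exists_krewerasRel_straddling hab hne
    have := h huv
    omega
  · exact iff_of_true (hK.refl a) rfl

end Noncrossing

section Kreweras

variable {n : ℕ}

theorem JointSame.mod_two_eq {P Q : Finpartition (univ : Finset (Fin n))} {x y : ℕ}
    (h : JointSame P Q x y) : x % 2 = y % 2 := by
  obtain ⟨i, j, h | h⟩ := h <;> omega

theorem JointNoncrossing.krewerasRel {P Q : Finpartition (univ : Finset (Fin n))}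
    (h : JointNoncrossing P Q) {a b : Fin n} (hab : Q.part a = Q.part b) :
    KrewerasRel (fun u v => P.part u = P.part v) a b := by
  have hcross {x y z w : ℕ} (hxz : JointSame P Q x z) (hyw : JointSame P Q y w)
      (hxy : x % 2 ≠ y % 2) : ¬ (x < y ∧ y < z ∧ z < w) := fun ⟨h₁, h₂, h₃⟩ =>
    h ⟨x, y, z, w, h₁, h₂, h₃, hxz, hyw, fun h' => hxy h'.mod_two_eq⟩
  intro u v huv
  wlog hle : u ≤ v generalizing u v
  · have := this huv.symm (le_of_not_ge hle)
    tauto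
  wlog hab' : a ≤ b generalizing a b
  · exact (this hab.symm (le_of_not_ge hab')).symm
  have hP : JointSame P Q (2 * u) (2 * v) := ⟨u, v, Or.inl ⟨rfl, rfl, huv⟩⟩
  have hQ : JointSame P Q (2 * a + 1) (2 * b + 1) := ⟨a, b, Or.inr ⟨rfl, rfl, hab⟩⟩
  have := hcross hP hQ (by omega)
  have := hcross hQ hP (by omega)
  omega

theorem jointNoncrossing_of_krewerasRel {P Q : Finpartition (univ : Finset (Fin n))}
    (hP : IsNoncrossing P) (hQ : IsNoncrossing Q)
    (hPQ : ∀ ⦃a b⦄, Q.part a = Q.part b → KrewerasRel (fun u v => P.part u = P.part v) a b) :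
    JointNoncrossing P Q := by
  rintro ⟨x, y, z, w, hxy, hyz, hzw, ⟨i, j, ⟨rfl, rfl, hij⟩ | ⟨rfl, rfl, hij⟩⟩,
    ⟨i', j', ⟨rfl, rfl, hij'⟩ | ⟨rfl, rfl, hij'⟩⟩, hne⟩
  · exact hne ⟨i, i', Or.inl ⟨rfl, rfl, hP.part_eq (by omega) (by omega) (by omega) hij hij'⟩⟩
  · have := hPQ hij' hij
    omega
  · have := hPQ hij hij'
    omega
  · exact hne ⟨i, i', Or.inr ⟨rfl, rfl, hQ.part_eq (by omega) (by omega) (by omega) hij hij'⟩⟩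

open Classical in
noncomputable def krewerasComplement (P : Finpartition (univ : Finset (Fin n))) :
    Finpartition (univ : Finset (Fin n)) :=
  Finpartition.ofSetoid ⟨_, krewerasRel_equivalence fun u v => P.part u = P.part v⟩

theorem part_krewerasComplement_eq_iff {P : Finpartition (univ : Finset (Fin n))} {a b : Fin n} :
    (krewerasComplement P).part a = (krewerasComplement P).part b ↔
      KrewerasRel (fun u v => P.part u = P.part v) a b := by
  rw [eq_comm, ← (krewerasComplement P).mem_part_iff_part_eq_part (mem_univ b) (mem_univ a)]
  classical
  exact Finpartition.mem_part_ofSetoid_iff_rel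

theorem isNoncrossing_krewerasComplement (P : Finpartition (univ : Finset (Fin n))) :
    IsNoncrossing (krewerasComplement P) := by
  rintro ⟨a, b, c, d, hab, hbc, hcd, hac, hbd, hne⟩
  rw [part_krewerasComplement_eq_iff] at hac hbd
  exact hne (part_krewerasComplement_eq_iff.2 (hac.of_interleave hab.le hbc.le hcd.le hbd))

theorem IsKreweras.part_eq_iff {k : NCP n → NCP n} (hk : IsKreweras k) (P : NCP n)
    {a b : Fin n} :
    (k P).1.part a = (k P).1.part b ↔ KrewerasRel (fun u v => P.1.part u = P.1.part v) a b := by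
  refine ⟨(hk P).1.krewerasRel, fun h => ?_⟩
  have hK := isNoncrossing_krewerasComplement P.1
  have hle : krewerasComplement P.1 ≤ (k P).1 := (hk P).2 ⟨_, hK⟩
    (jointNoncrossing_of_krewerasRel P.2 hK fun _ _ => part_krewerasComplement_eq_iff.1)
  exact Finpartition.part_eq_part_of_le hle (mem_univ b) (part_krewerasComplement_eq_iff.2 h)

theorem IsKreweras.part_kreweras_kreweras_eq_iff {k : NCP (n + 1) → NCP (n + 1)}
    (hk : IsKreweras k) (P : NCP (n + 1)) (a b : Fin (n + 1)) :
    (k (k P)).1.part a = (k (k P)).1.part b ↔ P.1.part (a + 1) = P.1.part (b + 1) := by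
  simp only [hk.part_eq_iff]
  exact P.2.krewerasRel_krewerasRel_iff a b

open Fin.NatCast in
theorem IsKreweras.part_iterate_eq_iff {k : NCP (n + 1) → NCP (n + 1)} (hk : IsKreweras k)
    (P : NCP (n + 1)) (i : ℕ) (a b : Fin (n + 1)) :
    (k^[2 * i] P).1.part a = (k^[2 * i] P).1.part b ↔ P.1.part (a + i) = P.1.part (b + i) := by
  induction i generalizing P with
  | zero => simp
  | succ i ih =>
    rw [mul_add_one, Function.iterate_add_apply, ih, show k^[2] P = k (k P) from rfl,
      hk.part_kreweras_kreweras_eq_iff, Nat.cast_succ, add_assoc, add_assoc]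

end Kreweras

/-- `κ^{2i}(P)` is the rotation of `P` by `i`: elements `j, j'` lie in the same
block of `P` iff `j - i` and `j' - i` (mod `n`) lie in the same block of
`κ^{2i}(P)`. -/
theorem kreweras_sq_iterate_rotation (n : ℕ) (hn : 0 < n) (k : NCP n → NCP n)
    (hk : IsKreweras k) (P : NCP n) (i : ℕ) (j j' : Fin n) :
    P.1.part j = P.1.part j' ↔
      (k^[2 * i] P).1.part (j - ⟨i % n, Nat.mod_lt i hn⟩) =
        (k^[2 * i] P).1.part (j' - ⟨i % n, Nat.mod_lt i hn⟩) := by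
  obtain ⟨m, rfl⟩ : ∃ m, n = m + 1 := ⟨n - 1, by omega⟩
  open Fin.NatCast in
  have hi : (⟨i % (m + 1), Nat.mod_lt i hn⟩ : Fin (m + 1)) = (i : Fin (m + 1)) :=
    Fin.ext (Fin.val_natCast i (m + 1)).symm
  rw [hi, hk.part_iterate_eq_iff, sub_add_cancel, sub_add_cancel]
end

section
/- The bijection ρ from plane trees with n edges to noncrossing partitions of [n] intertwines the cyclic shift with Kreweras complementation: ρ(φ(T)) = κ(ρ(T)) for every plane tree T with n edges. -/
/-!
Let `M` be the noncrossing matching of `T` on the boundary labels `1, …, 2n`. Overlaying `M`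
with `btn n`, resp. with `{(1,2), (3,4), …, (2n-1,2n)}`, gives two families of closed loops: the
odd labels on the loops of the first family are the blocks of `ρ(T)`, and, since `φ` rotates the
labels by one, the even labels on the loops of the second family are the blocks of `ρ(φ(T))`.
Chords of `M` join labels of opposite parity, and for a chord `(p, q)` both `[p, q]` and `(p, q)`
are unions of loops, one of each family depending on the parity of `p`. Looking at the chord at
the last label of a loop before a given point then shows that an odd loop never crosses an even
loop, so `ρ(T) ∪ ρ(φ(T))` is noncrossing, and that two even labels on different loops are
always separated by an odd loop, so that no coarser partition is. These are the two properties
characterising the Kreweras complement of `ρ(T)`.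
-/

/-- A plane tree: a root with a linearly ordered list of subtrees. -/
inductive PlaneTree : Type
  | node : List PlaneTree → PlaneTree

/-- Number of edges of a plane tree. -/
def PlaneTree.edges : PlaneTree → ℕ
  | .node ts => (ts.attach.map fun t => t.1.edges + 1).sum
decreasing_by
  have := List.sizeOf_lt_of_mem t.2
  simp only [PlaneTree.node.sizeOf_spec] at *
  omega

/-- Boundary labeling of a forest starting at label `i`: each edge of the
tree receives the labels on its left and right sides. -/
def matchList : ℕ → List PlaneTree → Finset (ℕ × ℕ)
  | _, [] => ∅
  | i, PlaneTree.node cs :: ts =>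
    insert (i, i + 2 * (PlaneTree.node cs).edges + 1)
      (matchList (i + 1) cs ∪ matchList (i + 2 * (PlaneTree.node cs).edges + 2) ts)
termination_by i ts => sizeOf ts

/-- The noncrossing perfect matching on `{1,…,2n}` encoding a plane tree with
`n` edges, via the boundary labeling `1,…,2n` counter-clockwise from the root. -/
def PlaneTree.toMatching : PlaneTree → Finset (ℕ × ℕ)
  | .node ts => matchList 1 ts

/-- `M` is a perfect matching of `{1,…,2n}`, with pairs written `(i,j)`, `i < j`. -/
def IsMatching (n : ℕ) (M : Finset (ℕ × ℕ)) : Prop :=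
  (∀ p ∈ M, 1 ≤ p.1 ∧ p.1 < p.2 ∧ p.2 ≤ 2 * n) ∧
  ∀ k, 1 ≤ k → k ≤ 2 * n → ∃! p : ℕ × ℕ, p ∈ M ∧ (p.1 = k ∨ p.2 = k)

/-- `M` is a noncrossing perfect matching of `{1,…,2n}`. -/
def IsNoncrossingMatching (n : ℕ) (M : Finset (ℕ × ℕ)) : Prop :=
  IsMatching n M ∧ ¬ ∃ a b c d : ℕ, a < b ∧ b < c ∧ c < d ∧ (a, c) ∈ M ∧ (b, d) ∈ M

/-- The cyclic index-shift map `φ` on matchings: shift all indices down by one,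
with `1 ↦ 2n`. -/
def phi (n : ℕ) (M : Finset (ℕ × ℕ)) : Finset (ℕ × ℕ) :=
  ((M.filter fun p => p.1 = 1).image fun p => (p.2 - 1, 2 * n)) ∪
  ((M.filter fun p => p.1 ≠ 1).image fun p => (p.1 - 1, p.2 - 1))

/-- Adjacency via a chord set: `a` and `b` are joined by a chord of `S`. -/
def ChordAdj (S : Finset (ℕ × ℕ)) (a b : ℕ) : Prop := (a, b) ∈ S ∨ (b, a) ∈ S

/-- Connectivity via chords of `S`. -/
def ChordConn (S : Finset (ℕ × ℕ)) (a b : ℕ) : Prop :=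
  Relation.ReflTransGen (ChordAdj S) a b

/-- Two noncrossing perfect matchings on `{1,…,2n}` form a meander: drawing one
above and one below the line yields a single closed loop, i.e. the union of
their chords connects all `2n` points. -/
def FormMeander (n : ℕ) (M M' : Finset (ℕ × ℕ)) : Prop :=
  ∀ k l : ℕ, 1 ≤ k → k ≤ 2 * n → 1 ≤ l → l ≤ 2 * n → ChordConn (M ∪ M') k l

/-- The least period of `x` under `f` is `l`. -/
def OrbitLen {α : Type*} (f : α → α) (x : α) (l : ℕ) : Prop :=
  0 < l ∧ f^[l] x = x ∧ ∀ m : ℕ, 0 < m → f^[m] x = x → l ≤ m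

/-- The bottom "star" tree matching `{(1,2n)} ∪ {(2i,2i+1) : 1 ≤ i ≤ n-1}`. -/
def btn (n : ℕ) : Finset (ℕ × ℕ) :=
  insert (1, 2 * n) ((Finset.range (n - 1)).image fun i => (2 * i + 2, 2 * i + 3))

/-- `P` is the image `ρ(T)` of the plane tree encoded by the matching `M`:
indices `i, j ∈ {1,…,n}` lie in the same block of `P` exactly when the odd
labels `2i-1` and `2j-1` lie on the same closed loop of `M` overlaid with the
star matching `btn n`, i.e. in the same part of the tree partition of `M`. -/
def IsRho (n : ℕ) (M : Finset (ℕ × ℕ))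
    (P : Finpartition (Finset.univ : Finset (Fin n))) : Prop :=
  ∀ i j : Fin n, P.part i = P.part j ↔
    ChordConn (M ∪ btn n) (2 * i.val + 1) (2 * j.val + 1)

def ChordClosed (S : Finset (ℕ × ℕ)) (s : Set ℕ) : Prop :=
  ∀ p ∈ S, p.1 ∈ s ↔ p.2 ∈ s

lemma ChordClosed.union {S T : Finset (ℕ × ℕ)} {s : Set ℕ} (hS : ChordClosed S s)
    (hT : ChordClosed T s) : ChordClosed (S ∪ T) s := by
  intro p hp
  rcases Finset.mem_union.1 hp with h | h
  exacts [hS p h, hT p h]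

namespace ChordConn

variable {S : Finset (ℕ × ℕ)} {a b c : ℕ}

lemma of_mem (h : (a, b) ∈ S) : ChordConn S a b :=
  Relation.ReflTransGen.single (Or.inl h)

lemma symm (h : ChordConn S a b) : ChordConn S b a := by
  induction h with
  | refl => exact Relation.ReflTransGen.refl
  | tail _ hadj ih => exact Relation.ReflTransGen.head hadj.symm ih

lemma trans (hab : ChordConn S a b) (hbc : ChordConn S b c) : ChordConn S a c :=
  Relation.ReflTransGen.trans hab hbc

lemma map {T : Finset (ℕ × ℕ)} (f : ℕ → ℕ) (hf : ∀ p ∈ S, ChordAdj T (f p.1) (f p.2))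
    (h : ChordConn S a b) : ChordConn T (f a) (f b) :=
  Relation.ReflTransGen.lift f
    (fun _ _ (hadj : ChordAdj S _ _) => hadj.elim (hf _) fun h' => (hf _ h').symm) _ _ h

lemma mem_iff {s : Set ℕ} (h : ChordConn S a b) (hs : ChordClosed S s) : a ∈ s ↔ b ∈ s := by
  induction h with
  | refl => rfl
  | tail _ hadj ih =>
    rcases hadj with h | h
    exacts [ih.trans (hs _ h), ih.trans (hs _ h).symm]

end ChordConn

namespace IsMatching

variable {n : ℕ} {M : Finset (ℕ × ℕ)}

lemma eq_of_mem_of_mem (hM : IsMatching n M) {p q : ℕ × ℕ} {k : ℕ} (hp : p ∈ M) (hq : q ∈ M)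
    (hkp : p.1 = k ∨ p.2 = k) (hkq : q.1 = k ∨ q.2 = k) : p = q := by
  have := hM.1 p hp
  obtain ⟨_, _, huniq⟩ := hM.2 k (by omega) (by omega)
  exact (huniq p ⟨hp, hkp⟩).trans (huniq q ⟨hq, hkq⟩).symm

lemma exists_partner (hM : IsMatching n M) {k : ℕ} (h₁ : 1 ≤ k) (h₂ : k ≤ 2 * n) :
    ∃ w, (k, w) ∈ M ∨ (w, k) ∈ M := by
  obtain ⟨⟨a, b⟩, ⟨hp, rfl | rfl⟩, -⟩ := hM.2 k h₁ h₂
  exacts [⟨b, .inl hp⟩, ⟨a, .inr hp⟩]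

/-- A set closed under a perfect matching is the disjoint union of the chords it contains. -/
lemma even_card (hM : IsMatching n M) (s : Finset ℕ) (hs : ∀ k ∈ s, 1 ≤ k ∧ k ≤ 2 * n)
    (hc : ChordClosed M s) : Even s.card := by
  classical
  have hs_eq : s = (M.filter fun p => p.1 ∈ s).biUnion fun p => {p.1, p.2} := by
    ext k
    simp only [Finset.mem_biUnion, Finset.mem_filter, Finset.mem_insert, Finset.mem_singleton]
    constructor
    · intro hk
      obtain ⟨p, ⟨hp, hpk⟩, -⟩ := hM.2 k (hs k hk).1 (hs k hk).2
      rcases hpk with rfl | rfl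
      exacts [⟨p, ⟨hp, hk⟩, .inl rfl⟩, ⟨p, ⟨hp, (hc p hp).2 hk⟩, .inr rfl⟩]
    · rintro ⟨p, ⟨hp, h₁⟩, rfl | rfl⟩
      exacts [h₁, (hc p hp).1 h₁]
  rw [hs_eq, Finset.card_biUnion]
  · rw [Finset.sum_congr rfl fun p hp => Finset.card_pair
      (hM.1 p (Finset.mem_filter.1 hp).1).2.1.ne, Finset.sum_const, smul_eq_mul]
    exact even_two.mul_left _
  · intro p hp q hq hpq
    simp only [Finset.coe_filter, Set.mem_ofPred_eq] at hp hq
    rw [Function.onFun, Finset.disjoint_left]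
    intro k hkp hkq
    simp only [Finset.mem_insert, Finset.mem_singleton] at hkp hkq
    exact hpq (hM.eq_of_mem_of_mem (k := k) hp.1 hq.1 (by omega) (by omega))

end IsMatching

namespace IsNoncrossingMatching

variable {n : ℕ} {M : Finset (ℕ × ℕ)}

lemma chordClosed_Icc_Ioo (hM : IsNoncrossingMatching n M) {p q : ℕ} (hpq : (p, q) ∈ M) :
    ChordClosed M (Set.Icc p q) ∧ ChordClosed M (Set.Ioo p q) := by
  suffices h : ∀ a b, (a, b) ∈ M →
      (a ∈ Set.Icc p q ↔ b ∈ Set.Icc p q) ∧ (a ∈ Set.Ioo p q ↔ b ∈ Set.Ioo p q) from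
    ⟨fun c hc => (h c.1 c.2 hc).1, fun c hc => (h c.1 c.2 hc).2⟩
  intro a b hab
  have := hM.1.1 _ hpq
  have := hM.1.1 _ hab
  simp only [Set.mem_Icc, Set.mem_Ioo]
  by_cases heq : (a, b) = (p, q)
  · obtain ⟨rfl, rfl⟩ := Prod.mk.inj heq
    omega
  have disjoint : ∀ k, (a = k ∨ b = k) → ¬ (p = k ∨ q = k) := fun k hk hk' =>
    heq (hM.1.eq_of_mem_of_mem hab hpq hk hk')
  have h₁ : ¬ (a < p ∧ p < b ∧ b < q) := fun h => hM.2 ⟨a, p, b, q, h.1, h.2.1, h.2.2, hab, hpq⟩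
  have h₂ : ¬ (p < a ∧ a < q ∧ q < b) := fun h => hM.2 ⟨p, a, q, b, h.1, h.2.1, h.2.2, hpq, hab⟩
  have := disjoint a (.inl rfl)
  have := disjoint b (.inr rfl)
  omega

/-- The labels strictly inside a chord are matched among themselves. -/
lemma mod_two_ne (hM : IsNoncrossingMatching n M) {p q : ℕ} (hpq : (p, q) ∈ M) :
    p % 2 ≠ q % 2 := by
  have := hM.1.1 _ hpq
  have h := hM.1.even_card (Finset.Ioo p q) (fun k hk => by simp at hk; omega)
    (by simpa using (hM.chordClosed_Icc_Ioo hpq).2)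
  rw [Nat.card_Ioo] at h
  obtain ⟨m, hm⟩ := h
  omega

end IsNoncrossingMatching

def adjPairs (n : ℕ) : Finset (ℕ × ℕ) :=
  (Finset.range n).image fun i => (2 * i + 1, 2 * i + 2)

lemma mem_adjPairs {n a b : ℕ} : (a, b) ∈ adjPairs n ↔ a % 2 = 1 ∧ b = a + 1 ∧ b ≤ 2 * n := by
  simp only [adjPairs, Finset.mem_image, Finset.mem_range, Prod.mk.injEq]
  constructor
  · rintro ⟨i, hi, rfl, rfl⟩
    omega
  · rintro ⟨ha, rfl, hb⟩
    exact ⟨a / 2, by omega, by omega, by omega⟩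

lemma mem_btn {n a b : ℕ} :
    (a, b) ∈ btn n ↔ a = 1 ∧ b = 2 * n ∨ a % 2 = 0 ∧ 2 ≤ a ∧ b = a + 1 ∧ b < 2 * n := by
  simp only [btn, Finset.mem_insert, Finset.mem_image, Finset.mem_range, Prod.mk.injEq]
  constructor
  · rintro (h | ⟨i, hi, rfl, rfl⟩)
    exacts [.inl h, .inr (by omega)]
  · rintro (h | ⟨ha, ha', rfl, hb⟩)
    exacts [.inl h, .inr ⟨a / 2 - 1, by omega, by omega, by omega⟩]

/-- Every label has degree two in `loops n M r`, so its components are closed loops; the odd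
labels on the loops for `r = 1` form the blocks of `ρ(M)`, the even labels on the loops for
`r = 0` those of `ρ(φ(M))`. -/
def loops (n : ℕ) (M : Finset (ℕ × ℕ)) (r : ℕ) : Finset (ℕ × ℕ) :=
  M ∪ if r = 1 then btn n else adjPairs n

lemma chordConn_loops_of_mem {n r a b : ℕ} {M : Finset (ℕ × ℕ)} (h : (a, b) ∈ M) :
    ChordConn (loops n M r) a b :=
  ChordConn.of_mem (Finset.mem_union_left _ h)

lemma succ_mem_loops {n r q : ℕ} (M : Finset (ℕ × ℕ)) (hr : r < 2) (hq : 1 ≤ q) (hq' : q < 2 * n)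
    (hqr : q % 2 ≠ r) : (q, q + 1) ∈ loops n M r := by
  refine Finset.mem_union_right _ ?_
  split_ifs with h
  · exact mem_btn.2 (.inr (by omega))
  · exact mem_adjPairs.2 (by omega)

namespace IsNoncrossingMatching

variable {n : ℕ} {M : Finset (ℕ × ℕ)} {p q : ℕ}

lemma chordClosed_loops_Icc (hM : IsNoncrossingMatching n M) (hpq : (p, q) ∈ M) :
    ChordClosed (loops n M (1 - p % 2)) (Set.Icc p q) := by
  have := hM.1.1 _ hpq
  have := hM.mod_two_ne hpq
  refine (hM.chordClosed_Icc_Ioo hpq).1.union ?_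
  rintro ⟨a, b⟩ h
  simp only [Set.mem_Icc]
  split_ifs at h
  · rw [mem_btn] at h
    omega
  · rw [mem_adjPairs] at h
    omega

lemma chordClosed_loops_Ioo (hM : IsNoncrossingMatching n M) (hpq : (p, q) ∈ M) :
    ChordClosed (loops n M (p % 2)) (Set.Ioo p q) := by
  have := hM.1.1 _ hpq
  have := hM.mod_two_ne hpq
  refine (hM.chordClosed_Icc_Ioo hpq).2.union ?_
  rintro ⟨a, b⟩ h
  simp only [Set.mem_Ioo]
  split_ifs at h
  · rw [mem_btn] at h
    omega
  · rw [mem_adjPairs] at h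
    omega

variable {r : ℕ}

/-- `z` is the last point of parity `r` on the loop of `x` before `b`: if its chord goes forward to
`w < 2n`, then `w + 1` is on the loop too, hence beyond `b`. -/
lemma exists_last_before (hM : IsNoncrossingMatching n M) (hr : r < 2) {x b : ℕ} (hx₁ : 1 ≤ x)
    (hx : x % 2 = r) (hxb : x < b) (hb : b ≤ 2 * n)
    (hb' : ¬ (b % 2 = r ∧ ChordConn (loops n M r) x b)) :
    ∃ z w, z % 2 = r ∧ ChordConn (loops n M r) x z ∧ x ≤ z ∧ z < b ∧
      ((w, z) ∈ M ∨ (z, w) ∈ M ∧ (w < 2 * n → b ≤ w)) := by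
  classical
  obtain ⟨z, hz, hmax⟩ := ((Finset.range b).filter fun z =>
      z % 2 = r ∧ ChordConn (loops n M r) x z).exists_max_image id
    ⟨x, Finset.mem_filter.2 ⟨Finset.mem_range.2 hxb, hx, Relation.ReflTransGen.refl⟩⟩
  simp only [Finset.mem_filter, Finset.mem_range, id] at hz hmax
  have hxz := hmax x ⟨hxb, hx, Relation.ReflTransGen.refl⟩
  obtain ⟨w, hw | hw⟩ := hM.1.exists_partner (k := z) (by omega) (by omega)
  · refine ⟨z, w, hz.2.1, hz.2.2, hxz, hz.1, .inr ⟨hw, fun hw₂ => ?_⟩⟩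
    have := hM.1.1 _ hw
    have := hM.mod_two_ne hw
    have hxw : ChordConn (loops n M r) x (w + 1) := hz.2.2.trans
      ((chordConn_loops_of_mem hw).trans (.of_mem (succ_mem_loops M hr (by omega) hw₂ (by omega))))
    by_contra hwb
    have : w + 1 ≠ b := fun h => hb' ⟨by omega, h ▸ hxw⟩
    have := hmax (w + 1) ⟨by omega, by omega, hxw⟩
    omega
  · exact ⟨z, w, hz.2.1, hz.2.2, hxz, hz.1, .inl hw⟩

/-- Let `z < u` be the last point of the loop of `x` before `u`. Its chord is not some `(w, z)`,
since `[w, z]` would contain the whole loop; so it is `(z, w)` with `u ≤ w < y`, and `[z, w]` is a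
union of loops of parity `1 - r`. -/
lemma lt_of_chordConn_of_between (hM : IsNoncrossingMatching n M) (hr : r < 2) {x y u v : ℕ}
    (hx₁ : 1 ≤ x) (hx : x % 2 = r) (hy : y % 2 = r) (hyn : y ≤ 2 * n)
    (hxy : ChordConn (loops n M r) x y) (hu : u % 2 ≠ r) (hxu : x < u) (huy : u < y)
    (huv : ChordConn (loops n M (1 - r)) u v) : v < y := by
  obtain ⟨z, w, hz, hxz, -, hzu, hw⟩ :=
    hM.exists_last_before hr hx₁ hx hxu (by omega) fun h => hu h.1
  have hzy : ChordConn (loops n M r) z y := hxz.symm.trans hxy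
  rcases hw with hw | ⟨hw, hwu⟩
  · have := hM.1.1 _ hw
    have hIcc := hM.chordClosed_loops_Icc hw
    rw [show 1 - w % 2 = r by have := hM.mod_two_ne hw; omega] at hIcc
    have hyz := ((hzy.mem_iff hIcc).1 ⟨by omega, le_rfl⟩).2
    omega
  · have := hM.1.1 _ hw
    have := hM.mod_two_ne hw
    have hIoo := hM.chordClosed_loops_Ioo hw
    rw [hz] at hIoo
    have hwy : w ≤ y := by
      by_contra h
      exact lt_irrefl z ((hzy.mem_iff hIoo).2 ⟨by omega, by omega⟩).1
    have hIcc := hM.chordClosed_loops_Icc hw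
    rw [hz] at hIcc
    have := (huv.mem_iff hIcc).1 ⟨by omega, hwu (by omega)⟩
    exact this.2.trans_lt (by omega)

theorem not_cross (hM : IsNoncrossingMatching n M) {x y u v : ℕ} (hx : x % 2 = 1)
    (hy : y % 2 = 1) (hu : u % 2 = 0) (hv : v % 2 = 0) (hu₁ : 1 ≤ u) (hyn : y ≤ 2 * n)
    (hvn : v ≤ 2 * n) (hxy : ChordConn (loops n M 1) x y) (huv : ChordConn (loops n M 0) u v) :
    ¬ (x < u ∧ u < y ∧ y < v) ∧ ¬ (u < x ∧ x < v ∧ v < y) := by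
  refine ⟨fun h => ?_, fun h => ?_⟩
  · have := hM.lt_of_chordConn_of_between (r := 1) (by omega) (by omega) hx hy hyn hxy
      (by omega) h.1 h.2.1 huv
    omega
  · have := hM.lt_of_chordConn_of_between (r := 0) (by omega) hu₁ hu hv hvn huv
      (by omega) h.1 h.2.1 hxy
    omega

/-- With `z` the last point of the loop of `u` before `v`, the odd loop through `z + 1` and the
other end `w` of the chord at `z` separates `u` from `v`. -/
theorem exists_cross_of_not_chordConn (hM : IsNoncrossingMatching n M) {u v : ℕ}
    (hu : u % 2 = 0) (hv : v % 2 = 0) (hu₁ : 1 ≤ u) (huv : u < v) (hvn : v ≤ 2 * n)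
    (hnc : ¬ ChordConn (loops n M 0) u v) :
    ∃ x y, x % 2 = 1 ∧ y % 2 = 1 ∧ y < 2 * n ∧ ChordConn (loops n M 1) x y ∧
      (x < u ∧ u < y ∧ y < v ∨ u < x ∧ x < v ∧ v < y) := by
  obtain ⟨z, w, hz, huz, hzu, hzv, hw⟩ :=
    hM.exists_last_before (r := 0) (by omega) hu₁ hu huv hvn fun h => hnc h.2
  have hstep : ChordConn (loops n M 1) z (z + 1) :=
    .of_mem (succ_mem_loops M (by omega) (by omega) (by omega) (by omega))
  rcases hw with hw | ⟨hw, hwv⟩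
  · have := hM.1.1 _ hw
    have := hM.mod_two_ne hw
    have hIcc := hM.chordClosed_loops_Icc hw
    rw [show 1 - w % 2 = 0 by omega] at hIcc
    have := (huz.mem_iff hIcc).2 ⟨by omega, le_rfl⟩
    exact ⟨w, z + 1, by omega, by omega, by omega,
      (chordConn_loops_of_mem hw).trans hstep, .inl (by simp only [Set.mem_Icc] at this; omega)⟩
  · have := hM.1.1 _ hw
    have := hM.mod_two_ne hw
    exact ⟨z + 1, w, by omega, by omega, by omega, hstep.symm.trans (chordConn_loops_of_mem hw),
      .inr (by have := hwv (by omega); omega)⟩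

end IsNoncrossingMatching

lemma mem_phi {n a b : ℕ} {M : Finset (ℕ × ℕ)} :
    (a, b) ∈ phi n M ↔ (∃ c, (1, c) ∈ M ∧ a = c - 1 ∧ b = 2 * n) ∨
      ∃ c d, (c, d) ∈ M ∧ c ≠ 1 ∧ a = c - 1 ∧ b = d - 1 := by
  simp only [phi, Finset.mem_union, Finset.mem_image, Finset.mem_filter, Prod.exists,
    Prod.mk.injEq]
  constructor
  · rintro (⟨c, d, ⟨h, rfl⟩, rfl, rfl⟩ | ⟨c, d, ⟨h, hc⟩, rfl, rfl⟩)
    exacts [.inl ⟨d, h, rfl, rfl⟩, .inr ⟨c, d, h, hc, rfl, rfl⟩]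
  · rintro (⟨c, h, rfl, rfl⟩ | ⟨c, d, h, hc, rfl, rfl⟩)
    exacts [.inl ⟨1, c, ⟨h, rfl⟩, rfl, rfl⟩, .inr ⟨c, d, ⟨h, hc⟩, rfl, rfl⟩]

def cycSucc (n k : ℕ) : ℕ := if k = 2 * n then 1 else k + 1

def cycPred (n k : ℕ) : ℕ := if k = 1 then 2 * n else k - 1

lemma cycSucc_of_lt {n k : ℕ} (h : k < 2 * n) : cycSucc n k = k + 1 := if_neg h.ne

lemma cycSucc_two_mul (n : ℕ) : cycSucc n (2 * n) = 1 := if_pos rfl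

lemma cycPred_of_ne {n k : ℕ} (h : k ≠ 1) : cycPred n k = k - 1 := if_neg h

lemma cycPred_one (n : ℕ) : cycPred n 1 = 2 * n := if_pos rfl

namespace IsMatching

variable {n : ℕ} {M : Finset (ℕ × ℕ)}

lemma chordAdj_cycSucc (hM : IsMatching n M) (hn : 1 ≤ n) :
    ∀ p ∈ phi n M ∪ btn n, ChordAdj (loops n M 0) (cycSucc n p.1) (cycSucc n p.2) := by
  rintro ⟨a, b⟩ hp
  simp only [ChordAdj, loops]
  rcases Finset.mem_union.1 hp with h | h
  · rcases mem_phi.1 h with ⟨c, hc, rfl, rfl⟩ | ⟨c, d, hcd, hc, rfl, rfl⟩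
    · have := hM.1 _ hc
      rw [cycSucc_of_lt (by omega), cycSucc_two_mul, Nat.sub_add_cancel (by omega)]
      exact .inr (Finset.mem_union_left _ hc)
    · have := hM.1 _ hcd
      rw [cycSucc_of_lt (by omega), cycSucc_of_lt (by omega), Nat.sub_add_cancel (by omega),
        Nat.sub_add_cancel (by omega)]
      exact .inl (Finset.mem_union_left _ hcd)
  · rcases mem_btn.1 h with ⟨rfl, rfl⟩ | ⟨ha, ha', rfl, hb⟩
    · rw [cycSucc_of_lt (by omega), cycSucc_two_mul]
      exact .inr (Finset.mem_union_right _ (mem_adjPairs.2 (by omega)))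
    · rw [cycSucc_of_lt (by omega), cycSucc_of_lt (by omega)]
      exact .inl (Finset.mem_union_right _ (mem_adjPairs.2 (by omega)))

lemma chordAdj_cycPred (hM : IsMatching n M) :
    ∀ p ∈ loops n M 0, ChordAdj (phi n M ∪ btn n) (cycPred n p.1) (cycPred n p.2) := by
  rintro ⟨a, b⟩ hp
  simp only [ChordAdj, loops] at hp ⊢
  rcases Finset.mem_union.1 hp with h | h
  · have := hM.1 _ h
    by_cases ha : a = 1
    · subst ha
      rw [cycPred_one, cycPred_of_ne (by omega)]
      exact .inr (Finset.mem_union_left _ (mem_phi.2 (.inl ⟨b, h, rfl, rfl⟩)))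
    · rw [cycPred_of_ne ha, cycPred_of_ne (by omega)]
      exact .inl (Finset.mem_union_left _ (mem_phi.2 (.inr ⟨a, b, h, ha, rfl, rfl⟩)))
  · obtain ⟨ha, rfl, hb⟩ := mem_adjPairs.1 h
    by_cases ha' : a = 1
    · subst ha'
      rw [cycPred_one, cycPred_of_ne (by omega)]
      exact .inr (Finset.mem_union_right _ (mem_btn.2 (.inl ⟨rfl, rfl⟩)))
    · rw [cycPred_of_ne ha', cycPred_of_ne (by omega)]
      exact .inl (Finset.mem_union_right _ (mem_btn.2 (.inr (by omega))))

theorem chordConn_phi_union_btn_iff (hM : IsMatching n M) {x y : ℕ} (hx₁ : 1 ≤ x)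
    (hx : x < 2 * n) (hy₁ : 1 ≤ y) (hy : y < 2 * n) :
    ChordConn (phi n M ∪ btn n) x y ↔ ChordConn (loops n M 0) (x + 1) (y + 1) := by
  constructor
  · intro h
    simpa only [cycSucc_of_lt hx, cycSucc_of_lt hy] using
      h.map _ (hM.chordAdj_cycSucc (by omega))
  · intro h
    simpa only [cycPred_of_ne (by omega : x + 1 ≠ 1), cycPred_of_ne (by omega : y + 1 ≠ 1),
      Nat.add_sub_cancel] using h.map _ hM.chordAdj_cycPred

end IsMatching

lemma Finpartition.le_of_part_eq_part {α : Type*} [DecidableEq α] {s : Finset α}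
    {P Q : Finpartition s} (h : ∀ a ∈ s, ∀ b ∈ s, P.part a = P.part b → Q.part a = Q.part b) :
    P ≤ Q := by
  intro t ht
  obtain ⟨a, ha⟩ := P.nonempty_of_mem_parts ht
  have has : a ∈ s := P.le ht ha
  refine ⟨Q.part a, Q.part_mem.2 has, fun b hb => ?_⟩
  have hbs : b ∈ s := P.le ht hb
  rw [Q.mem_part_iff_part_eq_part hbs has]
  exact h b hbs a has ((P.part_eq_of_mem ht hb).trans (P.part_eq_of_mem ht ha).symm)

section JointSame

variable {n : ℕ} {P Q : Finpartition (Finset.univ : Finset (Fin n))} {i j : Fin n}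

lemma jointSame_even_iff : JointSame P Q (2 * i) (2 * j) ↔ P.part i = P.part j := by
  refine ⟨?_, fun h => ⟨i, j, .inl ⟨rfl, rfl, h⟩⟩⟩
  rintro ⟨i', j', ⟨h₁, h₂, h⟩ | ⟨h₁, h₂, -⟩⟩
  · obtain rfl : i = i' := Fin.ext (by omega)
    obtain rfl : j = j' := Fin.ext (by omega)
    exact h
  · omega

lemma jointSame_odd_iff : JointSame P Q (2 * i + 1) (2 * j + 1) ↔ Q.part i = Q.part j := by
  refine ⟨?_, fun h => ⟨i, j, .inr ⟨rfl, rfl, h⟩⟩⟩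
  rintro ⟨i', j', ⟨h₁, h₂, -⟩ | ⟨h₁, h₂, h⟩⟩
  · omega
  · obtain rfl : i = i' := Fin.ext (by omega)
    obtain rfl : j = j' := Fin.ext (by omega)
    exact h

lemma not_jointSame_even_odd : ¬ JointSame P Q (2 * i) (2 * j + 1) := by
  rintro ⟨i', j', ⟨h₁, h₂, -⟩ | ⟨h₁, h₂, -⟩⟩ <;> omega

lemma not_jointSame_odd_even : ¬ JointSame P Q (2 * i + 1) (2 * j) := by
  rintro ⟨i', j', ⟨h₁, h₂, -⟩ | ⟨h₁, h₂, -⟩⟩ <;> omega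

end JointSame

namespace IsNoncrossingMatching

variable {n : ℕ} {M : Finset (ℕ × ℕ)}

lemma isRho_phi_iff (hM : IsNoncrossingMatching n M)
    {Q : Finpartition (Finset.univ : Finset (Fin n))} (hQ : IsRho n (phi n M) Q) (i j : Fin n) :
    Q.part i = Q.part j ↔ ChordConn (loops n M 0) (2 * i + 2) (2 * j + 2) :=
  (hQ i j).trans (hM.1.chordConn_phi_union_btn_iff (by omega) (by omega) (by omega) (by omega))

theorem jointNoncrossing_of_isRho (hM : IsNoncrossingMatching n M) (P Q : NCP n)
    (hP : IsRho n M P.1) (hQ : IsRho n (phi n M) Q.1) : JointNoncrossing P.1 Q.1 := by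
  -- position `m` of the interleaved order is the boundary label `m + 1`
  rintro ⟨a, b, c, d, hab, hbc, hcd, ⟨i, j, ⟨rfl, rfl, hij⟩ | ⟨rfl, rfl, hij⟩⟩,
    ⟨i', j', ⟨rfl, rfl, hij'⟩ | ⟨rfl, rfl, hij'⟩⟩, hac⟩
  · exact P.2 ⟨i, i', j, j', Fin.lt_def.2 (by omega), Fin.lt_def.2 (by omega),
      Fin.lt_def.2 (by omega), hij, hij', fun h => hac (jointSame_even_iff.2 h)⟩
  · exact (hM.not_cross (by omega) (by omega) (by omega) (by omega) (by omega) (by omega)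
      (by omega) ((hP i j).1 hij) ((hM.isRho_phi_iff hQ i' j').1 hij')).1 (by omega)
  · exact (hM.not_cross (by omega) (by omega) (by omega) (by omega) (by omega) (by omega)
      (by omega) ((hP i' j').1 hij') ((hM.isRho_phi_iff hQ i j).1 hij)).2 (by omega)
  · exact Q.2 ⟨i, i', j, j', Fin.lt_def.2 (by omega), Fin.lt_def.2 (by omega),
      Fin.lt_def.2 (by omega), hij, hij', fun h => hac (jointSame_odd_iff.2 h)⟩

/-- If `R` merged two indices that `Q` separates, the odd loop separating their even labels would
be a block of `P` crossing that block of `R`. -/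
theorem le_of_jointNoncrossing (hM : IsNoncrossingMatching n M)
    {P Q R : Finpartition (Finset.univ : Finset (Fin n))} (hP : IsRho n M P)
    (hQ : IsRho n (phi n M) Q) (hR : JointNoncrossing P R) : R ≤ Q := by
  have key : ∀ i j : Fin n, i < j → R.part i = R.part j → Q.part i = Q.part j := by
    intro i j hij hR_ij
    by_contra hQ_ij
    rw [hM.isRho_phi_iff hQ] at hQ_ij
    rw [Fin.lt_def] at hij
    obtain ⟨x, y, hx, hy, hyn, hxy, hcross⟩ :=
      hM.exists_cross_of_not_chordConn (by omega) (by omega) (by omega) (by omega) (by omega) hQ_ij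
    let p : Fin n := ⟨x / 2, by omega⟩
    let q : Fin n := ⟨y / 2, by omega⟩
    have hpx : 2 * (p : ℕ) + 1 = x := by simp only [p]; omega
    have hqy : 2 * (q : ℕ) + 1 = y := by simp only [q]; omega
    have hpq : P.part p = P.part q := (hP p q).2 (hpx ▸ hqy ▸ hxy)
    rcases hcross with h | h
    · exact hR ⟨2 * p, 2 * i + 1, 2 * q, 2 * j + 1, by omega, by omega, by omega,
        jointSame_even_iff.2 hpq, jointSame_odd_iff.2 hR_ij, not_jointSame_even_odd⟩
    · exact hR ⟨2 * i + 1, 2 * p, 2 * j + 1, 2 * q, by omega, by omega, by omega,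
        jointSame_odd_iff.2 hR_ij, jointSame_even_iff.2 hpq, not_jointSame_odd_even⟩
  refine Finpartition.le_of_part_eq_part fun i _ j _ hij => ?_
  rcases lt_trichotomy i j with h | rfl | h
  exacts [key i j h hij, rfl, (key j i h hij.symm).symm]

end IsNoncrossingMatching

structure IsNoncrossingMatchingOn (a b : ℕ) (M : Finset (ℕ × ℕ)) : Prop where
  bounds : ∀ p ∈ M, a ≤ p.1 ∧ p.1 < p.2 ∧ p.2 < b
  exists_mem : ∀ k, a ≤ k → k < b → ∃ p ∈ M, p.1 = k ∨ p.2 = k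
  eq_of_mem : ∀ p ∈ M, ∀ q ∈ M, ∀ k, (p.1 = k ∨ p.2 = k) → (q.1 = k ∨ q.2 = k) → p = q
  noncrossing : ¬ ∃ a b c d : ℕ, a < b ∧ b < c ∧ c < d ∧ (a, c) ∈ M ∧ (b, d) ∈ M

namespace IsNoncrossingMatchingOn

lemma empty (a : ℕ) : IsNoncrossingMatchingOn a a ∅ :=
  ⟨by simp, fun _ _ _ => by omega, by simp, by simp⟩

lemma nest {i j k : ℕ} {A B : Finset (ℕ × ℕ)} (hA : IsNoncrossingMatchingOn (i + 1) j A)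
    (hB : IsNoncrossingMatchingOn (j + 1) k B) (hij : i < j) (hjk : j < k) :
    IsNoncrossingMatchingOn i k (insert (i, j) (A ∪ B)) := by
  have loc : ∀ p ∈ insert (i, j) (A ∪ B), p = (i, j) ∨
      p ∈ A ∧ i < p.1 ∧ p.1 < p.2 ∧ p.2 < j ∨ p ∈ B ∧ j < p.1 ∧ p.1 < p.2 ∧ p.2 < k := by
    intro p hp
    rcases Finset.mem_insert.1 hp with h | h
    · exact .inl h
    rcases Finset.mem_union.1 h with h | h
    · have := hA.bounds p h
      exact .inr (.inl ⟨h, by omega⟩)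
    · have := hB.bounds p h
      exact .inr (.inr ⟨h, by omega⟩)
  refine ⟨fun p hp => ?_, fun l hl₁ hl₂ => ?_, fun p hp q hq l hpl hql => ?_, ?_⟩
  · rcases loc p hp with rfl | ⟨-, h⟩ | ⟨-, h⟩ <;> omega
  · rcases lt_trichotomy l j with hl | rfl | hl
    · by_cases hli : l = i
      · exact ⟨(i, j), Finset.mem_insert_self _ _, .inl hli.symm⟩
      obtain ⟨p, hp, hpl⟩ := hA.exists_mem l (by omega) hl
      exact ⟨p, Finset.mem_insert_of_mem (Finset.mem_union_left _ hp), hpl⟩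
    · exact ⟨(i, l), Finset.mem_insert_self _ _, .inr rfl⟩
    · obtain ⟨p, hp, hpl⟩ := hB.exists_mem l hl hl₂
      exact ⟨p, Finset.mem_insert_of_mem (Finset.mem_union_right _ hp), hpl⟩
  · rcases loc p hp with rfl | ⟨hpA, hp'⟩ | ⟨hpB, hp'⟩ <;>
      rcases loc q hq with rfl | ⟨hqA, hq'⟩ | ⟨hqB, hq'⟩
    all_goals first
      | rfl
      | exact hA.eq_of_mem p hpA q hqA l hpl hql
      | exact hB.eq_of_mem p hpB q hqB l hpl hql
      | omega
  · rintro ⟨a, b, c, d, hab, hbc, hcd, hac, hbd⟩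
    rcases loc _ hac with h | ⟨hA', h⟩ | ⟨hB', h⟩ <;>
      rcases loc _ hbd with h' | ⟨hA'', h'⟩ | ⟨hB'', h'⟩
    all_goals first
      | exact hA.noncrossing ⟨a, b, c, d, hab, hbc, hcd, hA', hA''⟩
      | exact hB.noncrossing ⟨a, b, c, d, hab, hbc, hcd, hB', hB''⟩
      | (simp only [Prod.mk.injEq] at *; omega)

lemma isNoncrossingMatching {n : ℕ} {M : Finset (ℕ × ℕ)}
    (hM : IsNoncrossingMatchingOn 1 (2 * n + 1) M) : IsNoncrossingMatching n M := by
  refine ⟨⟨fun p hp => ?_, fun k hk₁ hk₂ => ?_⟩, hM.noncrossing⟩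
  · have := hM.bounds p hp
    omega
  · obtain ⟨p, hp, hpk⟩ := hM.exists_mem k hk₁ (by omega)
    exact ⟨p, ⟨hp, hpk⟩, fun q hq => hM.eq_of_mem q hq.1 p hp k hq.2 hpk⟩

end IsNoncrossingMatchingOn

namespace PlaneTree

lemma edges_node_nil : (node []).edges = 0 := by
  simp [edges]

lemma edges_node_cons (cs ts : List PlaneTree) :
    (node (node cs :: ts)).edges = (node cs).edges + 1 + (node ts).edges := by
  simp [edges]

lemma isNoncrossingMatchingOn_matchList (i : ℕ) (ts : List PlaneTree) :
    IsNoncrossingMatchingOn i (i + 2 * (node ts).edges) (matchList i ts) := by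
  induction i, ts using matchList.induct with
  | case1 i =>
    rw [matchList, edges_node_nil]
    exact .empty i
  | case2 i cs ts ihcs ihts =>
    rw [matchList, edges_node_cons]
    exact .nest (by convert ihcs using 1; omega) (by convert ihts using 1; omega)
      (by omega) (by omega)

theorem isNoncrossingMatching_toMatching (T : PlaneTree) :
    IsNoncrossingMatching T.edges T.toMatching := by
  obtain ⟨ts⟩ := T
  exact IsNoncrossingMatchingOn.isNoncrossingMatching
    (by simpa [toMatching, add_comm] using isNoncrossingMatchingOn_matchList 1 ts)

end PlaneTree

theorem IsNoncrossingMatching.kreweras_eq {n : ℕ} {M : Finset (ℕ × ℕ)}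
    (hM : IsNoncrossingMatching n M) {k : NCP n → NCP n} (hk : IsKreweras k) {P Q : NCP n}
    (hP : IsRho n M P.1) (hQ : IsRho n (phi n M) Q.1) : k P = Q :=
  Subtype.ext (le_antisymm (hM.le_of_jointNoncrossing hP hQ (hk P).1)
    ((hk P).2 Q (hM.jointNoncrossing_of_isRho P Q hP hQ)))

/-- The bijection `ρ` from plane trees with `n` edges to `NC(n)` intertwines
the cyclic shift `φ` with Kreweras complementation: `ρ(φ(T)) = κ(ρ(T))`. -/
theorem rho_phi_eq_kreweras_rho (n : ℕ) (k : NCP n → NCP n)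
    (hk : IsKreweras k) (T : PlaneTree) (hT : T.edges = n) (P Q : NCP n)
    (hP : IsRho n T.toMatching P.1) (hQ : IsRho n (phi n T.toMatching) Q.1) :
    k P = Q := by
  subst hT
  exact T.isNoncrossingMatching_toMatching.kreweras_eq hk hP hQ
end

section
/- The total number of orbits of NC(n) under Kreweras complementation κ equals the number of (unrooted) planar trees with n edges. -/
/-!
Split every `i ∈ Fin n` into the two boundary points `2i+1, 2i+2` of a `2n`-gon and join the
right point of `i` to the left point of the next element of its block, read cyclically. This
sends a noncrossing partition to a noncrossing perfect matching, and every noncrossing matching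
arises from exactly one noncrossing partition. The Kreweras complement of `P` puts `x` and `y` in
one block exactly when `(x, y]` is a union of blocks of `P`; from this one reads off that the
matching of `κ P` is the matching of `P` rotated by one step. So the bijection conjugates `κ` to
the rotation `φ` and carries the orbits of one onto the orbits of the other.
-/

open Finset

namespace Finpartition

section Parts

variable {α β : Type*} [Fintype α] [DecidableEq α] {P Q : Finpartition (univ : Finset α)}
  {a b : α}

lemma mem_part_iff_part_eq : a ∈ P.part b ↔ P.part a = P.part b :=
  P.mem_part_iff_part_eq_part (mem_univ a) (mem_univ b)

lemma mem_parts_iff_exists_part_eq {t : Finset α} : t ∈ P.parts ↔ ∃ a, P.part a = t :=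
  ⟨fun ht => let ⟨a, _, h⟩ := P.part_surjOn ht; ⟨a, h⟩,
    by rintro ⟨a, rfl⟩; exact P.part_mem.2 (mem_univ a)⟩

lemma eq_of_part_eq_iff (h : ∀ a b, P.part a = P.part b ↔ Q.part a = Q.part b) : P = Q := by
  have hpart : ∀ a, P.part a = Q.part a := fun a => by
    ext b
    rw [mem_part_iff_part_eq, mem_part_iff_part_eq, h]
  ext t
  simp only [mem_parts_iff_exists_part_eq, hpart]

lemma part_eq_part_of_le_s14 (hPQ : P ≤ Q) (hab : P.part a = P.part b) : Q.part a = Q.part b := by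
  obtain ⟨t, ht, hsub⟩ := hPQ (P.part_mem.2 (mem_univ a))
  rw [Q.part_eq_of_mem ht (hsub (P.mem_part (mem_univ a))),
    Q.part_eq_of_mem ht (hsub (mem_part_iff_part_eq.2 hab.symm))]

variable (P) in
def IsUnionOfParts (S : Set α) : Prop :=
  ∀ ⦃a b⦄, P.part a = P.part b → a ∈ S → b ∈ S

lemma IsUnionOfParts.mem_iff {S : Set α} (hS : P.IsUnionOfParts S)
    (hab : P.part a = P.part b) : a ∈ S ↔ b ∈ S :=
  ⟨hS hab, hS hab.symm⟩

lemma IsUnionOfParts.compl {S : Set α} (hS : P.IsUnionOfParts S) : P.IsUnionOfParts Sᶜ :=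
  fun _ _ hab ha hb => ha (hS hab.symm hb)

noncomputable def orbitPartition (f : α → α) : Finpartition (univ : Finset α) :=
  by classical exact ofSetoid (Relation.EqvGen.setoid fun a b => f a = b)

lemma part_orbitPartition_eq_iff {f : α → α} :
    (orbitPartition f).part a = (orbitPartition f).part b ↔ Relation.EqvGen (f · = ·) a b := by
  classical
  rw [← mem_part_iff_part_eq, orbitPartition, mem_part_ofSetoid_iff_rel]
  exact ⟨Relation.EqvGen.symm _ _, Relation.EqvGen.symm _ _⟩

lemma part_orbitPartition_apply (f : α → α) (a : α) :
    (orbitPartition f).part (f a) = (orbitPartition f).part a :=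
  part_orbitPartition_eq_iff.2 (.symm _ _ (.rel _ _ rfl))

lemma isUnionOfParts_orbitPartition {f : α → α} {S : Set α} (hS : ∀ a, a ∈ S ↔ f a ∈ S) :
    (orbitPartition f).IsUnionOfParts S := by
  suffices h : ∀ a b, Relation.EqvGen (f · = ·) a b → (a ∈ S ↔ b ∈ S) from
    fun a b hab => (h a b (part_orbitPartition_eq_iff.1 hab)).1
  intro a b hab
  induction hab with
  | rel a _ h => exact h ▸ hS a
  | refl => rfl
  | symm _ _ _ ih => exact ih.symm
  | trans _ _ _ _ _ ih₁ ih₂ => exact ih₁.trans ih₂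

noncomputable def kerPartition (f : α → β) : Finpartition (univ : Finset α) :=
  by classical exact ofSetoid (Setoid.ker f)

lemma part_kerPartition_eq_iff {f : α → β} :
    (kerPartition f).part a = (kerPartition f).part b ↔ f a = f b := by
  classical
  rw [← mem_part_iff_part_eq, kerPartition, mem_part_ofSetoid_iff_rel, eq_comm]
  rfl

end Parts

section CyclicSucc

variable {α : Type*} [Fintype α] [LinearOrder α] (P : Finpartition (univ : Finset α))
  {a b c i j k : α}

def cyclicSucc (i : α) : α :=
  if h : ((P.part i).filter (i < ·)).Nonempty then ((P.part i).filter (i < ·)).min' h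
  else (P.part i).min' ⟨i, P.mem_part (mem_univ i)⟩

lemma cyclicSucc_mem_part : P.cyclicSucc i ∈ P.part i := by
  unfold cyclicSucc
  split_ifs with h
  · exact (mem_filter.1 (min'_mem _ h)).1
  · exact min'_mem _ _

@[simp]
lemma part_cyclicSucc : P.part (P.cyclicSucc i) = P.part i :=
  mem_part_iff_part_eq.1 P.cyclicSucc_mem_part

lemma lt_cyclicSucc_le_of_lt (hk : k ∈ P.part i) (hik : i < k) :
    i < P.cyclicSucc i ∧ P.cyclicSucc i ≤ k := by
  have h : ((P.part i).filter (i < ·)).Nonempty := ⟨k, mem_filter.2 ⟨hk, hik⟩⟩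
  rw [cyclicSucc, dif_pos h]
  exact ⟨(mem_filter.1 (min'_mem _ h)).2, min'_le _ _ (mem_filter.2 ⟨hk, hik⟩)⟩

lemma cyclicSucc_le_le_of_not_lt (h : ¬ i < P.cyclicSucc i) (hk : k ∈ P.part i) :
    P.cyclicSucc i ≤ k ∧ k ≤ i := by
  refine ⟨?_, not_lt.1 fun hik => h (P.lt_cyclicSucc_le_of_lt hk hik).1⟩
  have hempty : ¬ ((P.part i).filter (i < ·)).Nonempty :=
    fun ⟨l, hl⟩ => h (P.lt_cyclicSucc_le_of_lt (mem_filter.1 hl).1 (mem_filter.1 hl).2).1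
  rw [cyclicSucc, dif_neg hempty]
  exact min'_le _ _ hk

lemma cyclicSucc_eq_of_lt (hj : j ∈ P.part i) (hij : i < j)
    (hmin : ∀ k ∈ P.part i, i < k → j ≤ k) : P.cyclicSucc i = j := by
  obtain ⟨hlt, hle⟩ := P.lt_cyclicSucc_le_of_lt hj hij
  exact hle.antisymm (hmin _ P.cyclicSucc_mem_part hlt)

lemma cyclicSucc_eq_of_le (hj : j ∈ P.part i) (hbetween : ∀ k ∈ P.part i, j ≤ k ∧ k ≤ i) :
    P.cyclicSucc i = j := by
  by_cases h : i < P.cyclicSucc i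
  · exact absurd (hbetween _ P.cyclicSucc_mem_part).2 (not_le.2 h)
  · exact (P.cyclicSucc_le_le_of_not_lt h hj).1.antisymm (hbetween _ P.cyclicSucc_mem_part).1

lemma cyclicSucc_injective : Function.Injective P.cyclicSucc := by
  suffices h : ∀ a b, a < b → P.part a = P.part b → P.cyclicSucc a ≠ P.cyclicSucc b by
    intro a b hab
    by_contra hne
    have hpart : P.part a = P.part b := by rw [← P.part_cyclicSucc, hab, part_cyclicSucc]
    rcases lt_or_gt_of_ne hne with hlt | hlt
    · exact h a b hlt hpart hab
    · exact h b a hlt hpart.symm hab.symm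
  intro a b hab hpart
  obtain ⟨ha, ha_le⟩ := P.lt_cyclicSucc_le_of_lt (mem_part_iff_part_eq.2 hpart.symm) hab
  by_cases hb : b < P.cyclicSucc b
  · exact (ha_le.trans_lt hb).ne
  · exact ((P.cyclicSucc_le_le_of_not_lt hb (mem_part_iff_part_eq.2 hpart)).1.trans_lt ha).ne'

lemma cyclicSucc_bijective : Function.Bijective P.cyclicSucc :=
  P.cyclicSucc_injective.bijective_of_finite

variable {P} in
lemma eq_of_cyclicSucc_eq {Q : Finpartition (univ : Finset α)}
    (h : P.cyclicSucc = Q.cyclicSucc) : P = Q := by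
  suffices hmono : ∀ {P Q : Finpartition (univ : Finset α)}, P.cyclicSucc = Q.cyclicSucc →
      ∀ a b, a ≤ b → P.part a = P.part b → Q.part a = Q.part b by
    refine eq_of_part_eq_iff fun a b => ?_
    rcases le_total a b with hab | hab
    · exact ⟨hmono h a b hab, hmono h.symm a b hab⟩
    · exact ⟨fun e => (hmono h b a hab e.symm).symm, fun e => (hmono h.symm b a hab e.symm).symm⟩
  intro P Q h a
  induction a using WellFoundedGT.induction with
  | _ a ih =>
  intro b hab hP
  rcases hab.eq_or_lt with rfl | hlt
  · rfl
  obtain ⟨h1, h2⟩ := P.lt_cyclicSucc_le_of_lt (mem_part_iff_part_eq.2 hP.symm) hlt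
  rw [← Q.part_cyclicSucc, ← h]
  exact ih _ h1 b h2 (by rw [part_cyclicSucc, hP])

lemma exists_le_lt_lt_cyclicSucc (hc : c ∈ P.part a) (hab : a < b) (hbc : b < c)
    (hb : b ∉ P.part a) :
    ∃ u ∈ P.part a, a ≤ u ∧ u < b ∧ b < P.cyclicSucc u ∧ P.cyclicSucc u ≤ c := by
  have hne : ((P.part a).filter (· < b)).Nonempty :=
    ⟨a, mem_filter.2 ⟨P.mem_part (mem_univ a), hab⟩⟩
  set u := ((P.part a).filter (· < b)).max' hne
  have hu : u ∈ P.part a ∧ u < b := mem_filter.1 (max'_mem _ hne)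
  have hmax : ∀ k ∈ P.part a, k < b → k ≤ u :=
    fun k hk hkb => le_max' _ _ (mem_filter.2 ⟨hk, hkb⟩)
  have hpart : P.part u = P.part a := mem_part_iff_part_eq.1 hu.1
  have hsucc : P.cyclicSucc u ∈ P.part a := hpart ▸ P.cyclicSucc_mem_part
  obtain ⟨hlt, hle⟩ := P.lt_cyclicSucc_le_of_lt (hpart ▸ hc) (hu.2.trans hbc)
  refine ⟨u, hu.1, hmax a (P.mem_part (mem_univ a)) hab, hu.2, ?_, hle⟩
  by_contra! hsb
  rcases hsb.lt_or_eq with hsb | hsb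
  · exact (hmax _ hsucc hsb).not_gt hlt
  · exact hb (hsb ▸ hsucc)

end CyclicSucc

end Finpartition

namespace IsNoncrossing

open Finpartition

variable {n : ℕ} {P : Finpartition (univ : Finset (Fin n))} {i : Fin n}

lemma mem_Ioo_of_part_eq_s14 (hP : IsNoncrossing P) {a c p q : Fin n} (hac : P.part a = P.part c)
    (hpq : P.part p = P.part q) (hpa : P.part p ≠ P.part a) (hp : p ∈ Set.Ioo a c) :
    q ∈ Set.Ioo a c := by
  obtain ⟨hap, hpc⟩ := hp
  have hqa : q ≠ a := by rintro rfl; exact hpa hpq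
  have hqc : q ≠ c := by rintro rfl; exact hpa (hpq.trans hac.symm)
  by_contra hq
  rcases lt_or_gt_of_ne hqa with hlt | hgt
  · exact hP ⟨q, a, p, c, hlt, hap, hpc, hpq.symm, hac, fun h => hpa (hpq.trans h)⟩
  · have hcq : c < q := lt_of_le_of_ne (not_lt.1 fun h => hq ⟨hgt, h⟩) hqc.symm
    exact hP ⟨a, p, c, q, hap, hpc, hcq, hac, hpq, fun h => hpa h.symm⟩

lemma isUnionOfParts_Ioo_cyclicSucc (hP : IsNoncrossing P) (i : Fin n) :
    P.IsUnionOfParts (Set.Ioo i (P.cyclicSucc i)) := by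
  intro a b hab ha
  by_cases hai : P.part a = P.part i
  · exact absurd (P.lt_cyclicSucc_le_of_lt (mem_part_iff_part_eq.2 hai) ha.1).2 (not_le.2 ha.2)
  · exact hP.mem_Ioo_of_part_eq_s14 P.part_cyclicSucc.symm hab hai ha

lemma isUnionOfParts_Icc_cyclicSucc (hP : IsNoncrossing P) (h : ¬ i < P.cyclicSucc i) :
    P.IsUnionOfParts (Set.Icc (P.cyclicSucc i) i) := by
  intro a b hab ha
  by_cases hai : P.part a = P.part i
  · exact P.cyclicSucc_le_le_of_not_lt h (mem_part_iff_part_eq.2 (hab.symm.trans hai))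
  · have hai' : P.part a ≠ P.part (P.cyclicSucc i) := by rwa [part_cyclicSucc]
    have ha' : a ∈ Set.Ioo (P.cyclicSucc i) i :=
      ⟨ha.1.lt_of_ne fun e => hai' (e ▸ rfl), ha.2.lt_of_ne fun e => hai (e ▸ rfl)⟩
    exact Set.Ioo_subset_Icc_self (hP.mem_Ioo_of_part_eq_s14 P.part_cyclicSucc hab hai' ha')

end IsNoncrossing

section Matchings

variable {n : ℕ} {M M' : Finset (ℕ × ℕ)} {p q : ℕ × ℕ} {k : ℕ}

def arc (u v : ℕ) : ℕ × ℕ := (min u v, max u v)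

lemma arc_comm (u v : ℕ) : arc u v = arc v u := by
  simp only [arc, min_comm, max_comm]

lemma arc_map (f : ℕ → ℕ) (u v : ℕ) :
    arc (f (arc u v).1) (f (arc u v).2) = arc (f u) (f v) := by
  rcases le_total u v with h | h
  · simp only [arc, min_eq_left h, max_eq_right h]
  · simp only [arc, min_eq_right h, max_eq_left h, min_comm (f v), max_comm (f v)]

lemma arc_fst_eq_or_snd_eq_iff {u v : ℕ} :
    (arc u v).1 = k ∨ (arc u v).2 = k ↔ u = k ∨ v = k := by
  rcases le_total u v with h | h <;> simp [arc, h, or_comm]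

lemma arc_mem_iff {u v : ℕ} {S : Set ℕ} :
    ((arc u v).1 ∈ S ↔ (arc u v).2 ∈ S) ↔ (u ∈ S ↔ v ∈ S) := by
  rcases le_total u v with h | h <;> simp [arc, h, Iff.comm]

lemma arc_even_odd_inj {a b c d : ℕ}
    (h : arc (2 * a + 2) (2 * b + 1) = arc (2 * c + 2) (2 * d + 1)) : a = c ∧ b = d := by
  simp only [arc, Prod.ext_iff] at h
  omega

lemma IsMatching.eq_of_mem_of_mem_s14 (hM : IsMatching n M) (hp : p ∈ M) (hq : q ∈ M)
    (hpk : p.1 = k ∨ p.2 = k) (hqk : q.1 = k ∨ q.2 = k) : p = q := by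
  have := hM.1 p hp
  exact (hM.2 k (by omega) (by omega)).unique ⟨hp, hpk⟩ ⟨hq, hqk⟩

lemma IsMatching.eq_of_subset (hM : IsMatching n M) (hM' : IsMatching n M') (h : M' ⊆ M) :
    M' = M := by
  refine subset_antisymm h fun p hp => ?_
  have := hM.1 p hp
  obtain ⟨q, hq, hqk⟩ := (hM'.2 p.1 (by omega) (by omega)).exists
  rwa [hM.eq_of_mem_of_mem_s14 hp (h hq) (Or.inl rfl) hqk]

lemma IsNoncrossingMatching.nested (hM : IsNoncrossingMatching n M) (hp : p ∈ M)
    (hq : q ∈ M) : p.1 < q.1 ∧ q.1 < p.2 ↔ p.1 < q.2 ∧ q.2 < p.2 := by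
  have hpb := hM.1.1 p hp
  have hqb := hM.1.1 q hq
  constructor
  · rintro ⟨h1, h2⟩
    refine ⟨by omega, lt_of_not_ge fun h => ?_⟩
    rcases h.lt_or_eq with h | h
    · exact hM.2 ⟨p.1, q.1, p.2, q.2, h1, h2, h, hp, hq⟩
    · obtain rfl := hM.1.eq_of_mem_of_mem_s14 hp hq (Or.inr rfl) (Or.inr h.symm)
      omega
  · rintro ⟨h1, h2⟩
    refine ⟨lt_of_not_ge fun h => ?_, by omega⟩
    rcases h.lt_or_eq with h | h
    · exact hM.2 ⟨q.1, p.1, q.2, p.2, h, h1, h2, hq, hp⟩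
    · obtain rfl := hM.1.eq_of_mem_of_mem_s14 hp hq (Or.inl rfl) (Or.inl h)
      omega

lemma not_crossing_of_nested
    (h : ∀ p ∈ M, ∀ q ∈ M, (p.1 < q.1 ∧ q.1 < p.2 ↔ p.1 < q.2 ∧ q.2 < p.2)) :
    ¬ ∃ a b c d : ℕ, a < b ∧ b < c ∧ c < d ∧ (a, c) ∈ M ∧ (b, d) ∈ M := by
  rintro ⟨a, b, c, d, hab, hbc, hcd, hac, hbd⟩
  exact absurd ((h _ hac _ hbd).1 ⟨hab, hbc⟩).2 (not_lt.2 hcd.le)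

/-- The points strictly inside an arc are matched among themselves, so there are evenly many. -/
lemma IsNoncrossingMatching.odd_add (hM : IsNoncrossingMatching n M) (hp : p ∈ M) :
    Odd (p.1 + p.2) := by
  classical
  have hpb := hM.1.1 p hp
  set inner := M.filter fun q => p.1 < q.1 ∧ q.2 < p.2
  have hsplit : Ioo p.1 p.2 = inner.image Prod.fst ∪ inner.image Prod.snd := by
    ext x
    simp only [mem_Ioo, mem_union, mem_image, mem_filter, inner]
    constructor
    · rintro ⟨h1, h2⟩
      obtain ⟨q, hq, hqx⟩ := (hM.1.2 x (by omega) (by omega)).exists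
      have hnest := hM.nested hp hq
      have := hM.1.1 q hq
      rcases hqx with rfl | rfl
      · exact Or.inl ⟨q, ⟨hq, by omega⟩, rfl⟩
      · exact Or.inr ⟨q, ⟨hq, by omega⟩, rfl⟩
    · rintro (⟨q, ⟨hq, h⟩, rfl⟩ | ⟨q, ⟨hq, h⟩, rfl⟩) <;> have := hM.1.1 q hq <;> omega
  have hdisj : Disjoint (inner.image Prod.fst) (inner.image Prod.snd) := by
    simp only [disjoint_left, mem_image, mem_filter, inner]
    rintro _ ⟨q, ⟨hq, -⟩, rfl⟩ ⟨q', ⟨hq', -⟩, hq'q⟩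
    obtain rfl := hM.1.eq_of_mem_of_mem_s14 hq hq' (Or.inl rfl) (Or.inr hq'q)
    have := hM.1.1 q hq
    omega
  have hinj (f : ℕ × ℕ → ℕ) (hf : ∀ q ∈ M, q.1 = f q ∨ q.2 = f q) : Set.InjOn f inner :=
    fun q hq q' hq' hqq' => hM.1.eq_of_mem_of_mem_s14 (mem_filter.1 hq).1 (mem_filter.1 hq').1
      (hf q (mem_filter.1 hq).1) (hqq' ▸ hf q' (mem_filter.1 hq').1)
  have hcard : #(Ioo p.1 p.2) = 2 * #inner := by
    rw [hsplit, card_union_of_disjoint hdisj,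
      card_image_of_injOn (hinj _ fun _ _ => Or.inl rfl),
      card_image_of_injOn (hinj _ fun _ _ => Or.inr rfl), two_mul]
  rw [Nat.card_Ioo] at hcard
  exact ⟨p.1 + #inner, by omega⟩

lemma IsNoncrossingMatching.exists_arc_mem (hM : IsNoncrossingMatching n M) (i : Fin n) :
    ∃ j : Fin n, arc (2 * (i : ℕ) + 2) (2 * (j : ℕ) + 1) ∈ M := by
  obtain ⟨p, hp, hpk⟩ := (hM.1.2 (2 * i + 2) (by omega) (by omega)).exists
  obtain ⟨m, hm⟩ := hM.odd_add hp
  have := hM.1.1 p hp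
  rcases hpk with hpk | hpk
  · refine ⟨⟨(p.2 - 1) / 2, by omega⟩, ?_⟩
    convert hp using 1
    simp only [arc, Prod.ext_iff]
    omega
  · refine ⟨⟨(p.1 - 1) / 2, by omega⟩, ?_⟩
    convert hp using 1
    simp only [arc, Prod.ext_iff]
    omega

end Matchings

namespace Finpartition

variable {n : ℕ} (P : Finpartition (univ : Finset (Fin n))) {i : Fin n}

/-- Element `i` owns the boundary points `2i+1, 2i+2` of the `2n`-gon; its arc joins its right
point to the left point of its cyclic successor. -/
def arcOf (i : Fin n) : ℕ × ℕ := arc (2 * (i : ℕ) + 2) (2 * (P.cyclicSucc i : ℕ) + 1)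

def toMatching : Finset (ℕ × ℕ) := univ.image P.arcOf

lemma mem_toMatching {p : ℕ × ℕ} : p ∈ P.toMatching ↔ ∃ i, P.arcOf i = p := by
  simp [toMatching]

lemma arcOf_of_lt (h : i < P.cyclicSucc i) :
    P.arcOf i = (2 * (i : ℕ) + 2, 2 * (P.cyclicSucc i : ℕ) + 1) := by
  simp only [arcOf, arc, Prod.ext_iff]
  omega

lemma isMatching_toMatching : IsMatching n P.toMatching := by
  refine ⟨?_, fun k hk1 hk2 => ?_⟩
  · simp only [mem_toMatching]
    rintro _ ⟨i, rfl⟩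
    have := (P.cyclicSucc i).isLt
    simp only [arcOf, arc]
    omega
  have huniq : ∀ i j : Fin n, (2 * i.val + 2 = k ∨ 2 * (P.cyclicSucc i).val + 1 = k) →
      (2 * j.val + 2 = k ∨ 2 * (P.cyclicSucc j).val + 1 = k) → i = j := by
    rintro i j (hi | hi) (hj | hj)
    · omega
    · omega
    · omega
    · exact P.cyclicSucc_injective (by omega)
  obtain ⟨i, hi⟩ : ∃ i : Fin n, 2 * i.val + 2 = k ∨ 2 * (P.cyclicSucc i).val + 1 = k := by
    rcases Nat.even_or_odd k with ⟨m, hm⟩ | ⟨m, hm⟩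
    · exact ⟨⟨m - 1, by omega⟩, Or.inl (by simp only; omega)⟩
    · obtain ⟨i, hi⟩ := P.cyclicSucc_bijective.2 ⟨m, by omega⟩
      exact ⟨i, Or.inr (by rw [hi]; simp only; omega)⟩
  refine ⟨P.arcOf i, ⟨P.mem_toMatching.2 ⟨i, rfl⟩, arc_fst_eq_or_snd_eq_iff.2 hi⟩, ?_⟩
  rintro p ⟨hp, hpk⟩
  obtain ⟨j, rfl⟩ := P.mem_toMatching.1 hp
  rw [huniq j i (arc_fst_eq_or_snd_eq_iff.1 hpk) hi]

lemma isNoncrossingMatching_toMatching (hP : IsNoncrossing P) :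
    IsNoncrossingMatching n P.toMatching := by
  refine ⟨P.isMatching_toMatching, not_crossing_of_nested ?_⟩
  simp only [mem_toMatching]
  rintro _ ⟨i, rfl⟩ _ ⟨j, rfl⟩
  have hsat_Ioo :=
    (hP.isUnionOfParts_Ioo_cyclicSucc i).mem_iff (P.part_cyclicSucc (i := j)).symm
  have := arc_mem_iff (u := 2 * j + 2) (v := 2 * P.cyclicSucc j + 1)
    (S := Set.Ioo (P.arcOf i).1 (P.arcOf i).2)
  simp only [Set.mem_Ioo] at this hsat_Ioo
  rw [show P.arcOf j = arc _ _ from rfl, this]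
  by_cases h : i < P.cyclicSucc i
  · simp only [arcOf, arc]
    omega
  · have hsat_Icc :=
      (hP.isUnionOfParts_Icc_cyclicSucc h).mem_iff (P.part_cyclicSucc (i := j)).symm
    have hinj : j = i ↔ P.cyclicSucc j = P.cyclicSucc i := P.cyclicSucc_injective.eq_iff.symm
    simp only [Set.mem_Icc, arcOf, arc, Fin.ext_iff] at hsat_Icc hinj ⊢
    omega

variable {P}

lemma isNoncrossing_of_toMatching (h : IsNoncrossingMatching n P.toMatching) :
    IsNoncrossing P := by
  rintro ⟨a, b, c, d, hab, hbc, hcd, hac, hbd, hne⟩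
  obtain ⟨u, hu, -, hub, hbu, huc⟩ := P.exists_le_lt_lt_cyclicSucc
    (mem_part_iff_part_eq.2 hac.symm) hab hbc fun hb => hne (mem_part_iff_part_eq.1 hb).symm
  have hsu : P.cyclicSucc u ∉ P.part b := fun hs => hne <| by
    rw [← mem_part_iff_part_eq.1 hu, ← P.part_cyclicSucc, mem_part_iff_part_eq.1 hs]
  obtain ⟨x, -, hbx, hxu, hux, -⟩ := P.exists_le_lt_lt_cyclicSucc
    (mem_part_iff_part_eq.2 hbd.symm) hbu (huc.trans_lt hcd) hsu
  refine h.2 ⟨_, _, _, _, ?_, ?_, ?_,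
    (P.arcOf_of_lt (hub.trans hbu)) ▸ P.mem_toMatching.2 ⟨u, rfl⟩,
    (P.arcOf_of_lt (hxu.trans hux)) ▸ P.mem_toMatching.2 ⟨x, rfl⟩⟩ <;> omega

lemma toMatching_injective : Function.Injective (toMatching (n := n)) := by
  intro P Q h
  refine eq_of_cyclicSucc_eq (funext fun i => ?_)
  obtain ⟨j, hj⟩ := Q.mem_toMatching.1 (h ▸ P.mem_toMatching.2 ⟨i, rfl⟩)
  obtain ⟨hji, hσ⟩ := arc_even_odd_inj hj
  obtain rfl : j = i := Fin.ext hji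
  exact Fin.ext hσ.symm

/-- The gap `(i, f i)`, or the span `[f i, i]`, is `f`-invariant by nestedness of the arcs of `M`,
hence a union of orbits. -/
lemma cyclicSucc_orbitPartition {M : Finset (ℕ × ℕ)} (hM : IsNoncrossingMatching n M)
    {f : Fin n → Fin n} (hf : ∀ i : Fin n, arc (2 * (i : ℕ) + 2) (2 * (f i : ℕ) + 1) ∈ M)
    (i : Fin n) :
    (orbitPartition f).cyclicSucc i = f i := by
  have hnested (x : Fin n) := hM.nested (hf i) (hf x)
  have hf_inj : Function.Injective f := fun i j hij => Fin.ext <| (arc_even_odd_inj <|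
    hM.1.eq_of_mem_of_mem_s14 (hf i) (hf j) (arc_fst_eq_or_snd_eq_iff.2 (Or.inr rfl))
      (arc_fst_eq_or_snd_eq_iff.2 (Or.inr (by rw [hij])))).1
  set P := orbitPartition f
  have hfi : f i ∈ P.part i := mem_part_iff_part_eq.2 (part_orbitPartition_apply f i)
  by_cases h : i < f i
  · have hS : P.IsUnionOfParts (Set.Ioo i (f i)) := isUnionOfParts_orbitPartition fun x => by
      have := hnested x
      simp only [arc, Set.mem_Ioo] at this ⊢
      omega
    exact P.cyclicSucc_eq_of_lt hfi h fun k hk hik => not_lt.1 fun hkf =>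
      (hS (mem_part_iff_part_eq.1 hk) ⟨hik, hkf⟩).1.false
  · have hS : P.IsUnionOfParts (Set.Icc (f i) i) := isUnionOfParts_orbitPartition fun x => by
      have := hnested x
      have hinj : x = i ↔ f x = f i := hf_inj.eq_iff.symm
      simp only [arc, Set.mem_Icc, Fin.ext_iff] at this hinj ⊢
      omega
    exact P.cyclicSucc_eq_of_le hfi fun k hk =>
      hS (mem_part_iff_part_eq.1 hk).symm ⟨not_lt.1 h, le_rfl⟩

lemma exists_toMatching_eq {M : Finset (ℕ × ℕ)} (hM : IsNoncrossingMatching n M) :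
    ∃ P : Finpartition (univ : Finset (Fin n)), P.toMatching = M := by
  choose f hf using hM.exists_arc_mem
  refine ⟨orbitPartition f, hM.1.eq_of_subset (orbitPartition f).isMatching_toMatching ?_⟩
  simp only [subset_iff, mem_toMatching]
  rintro _ ⟨i, rfl⟩
  rw [arcOf, cyclicSucc_orbitPartition hM hf]
  exact hf i

end Finpartition

noncomputable def ncMatchingEquiv (n : ℕ) : NCP n ≃ {M // IsNoncrossingMatching n M} :=
  Equiv.ofBijective (fun P => ⟨P.1.toMatching, P.1.isNoncrossingMatching_toMatching P.2⟩)
    ⟨fun _ _ h => Subtype.ext (Finpartition.toMatching_injective (congrArg Subtype.val h)),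
      fun M => let ⟨P, hP⟩ := Finpartition.exists_toMatching_eq M.2
        ⟨⟨P, Finpartition.isNoncrossing_of_toMatching (hP ▸ M.2)⟩, Subtype.ext hP⟩⟩

lemma Function.update_id_eq_update_id {α : Type*} [DecidableEq α] {x y u v : α}
    (h : Function.update id y x u = Function.update id y x v) :
    u = v ∨ (u = x ∨ u = y) ∧ (v = x ∨ v = y) := by
  simp only [Function.update_apply, id] at h
  split_ifs at h <;> tauto

lemma val_finRotate {n : ℕ} (u : Fin n) :
    (finRotate n u : ℕ) = if (u : ℕ) + 1 = n then 0 else (u : ℕ) + 1 := by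
  cases n with
  | zero => exact u.elim0
  | succ m =>
    rw [coe_finRotate]
    simp only [Fin.ext_iff, Fin.val_last, Nat.add_right_cancel_iff]

def rotatePoint (n x : ℕ) : ℕ := if x = 1 then 2 * n else x - 1

lemma phi_eq_image {n : ℕ} {M : Finset (ℕ × ℕ)}
    (hM : ∀ p ∈ M, 1 ≤ p.1 ∧ p.1 < p.2 ∧ p.2 ≤ 2 * n) :
    phi n M = M.image fun p => arc (rotatePoint n p.1) (rotatePoint n p.2) := by
  ext q
  simp only [phi, mem_union, mem_image, mem_filter]
  constructor
  · rintro (⟨p, ⟨hp, h1⟩, rfl⟩ | ⟨p, ⟨hp, h1⟩, rfl⟩) <;> refine ⟨p, hp, ?_⟩ <;>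
      have := hM p hp <;> simp only [arc, rotatePoint, Prod.ext_iff] <;> split_ifs <;> omega
  · rintro ⟨p, hp, rfl⟩
    have := hM p hp
    by_cases h1 : p.1 = 1
    · exact Or.inl ⟨p, ⟨hp, h1⟩, by simp only [arc, rotatePoint, Prod.ext_iff]; split_ifs <;> omega⟩
    · exact Or.inr ⟨p, ⟨hp, h1⟩, by simp only [arc, rotatePoint, Prod.ext_iff]; split_ifs <;> omega⟩

section Kreweras

open Finpartition

variable {n : ℕ} {P Q : Finpartition (univ : Finset (Fin n))}

lemma JointSame.mod_two_eq_s14 {a b : ℕ} (h : JointSame P Q a b) : a % 2 = b % 2 := by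
  obtain ⟨i, j, ⟨rfl, rfl, -⟩ | ⟨rfl, rfl, -⟩⟩ := h <;> omega

lemma isUnionOfParts_uIoc_of_jointNoncrossing (h : JointNoncrossing P Q) {x y : Fin n}
    (hxy : Q.part x = Q.part y) : P.IsUnionOfParts (Set.uIoc x y) := by
  wlog hle : x ≤ y generalizing x y
  · rw [Set.uIoc_comm]
    exact this hxy.symm (le_of_not_ge hle)
  rw [Set.uIoc_of_le hle]
  rintro p q hpq ⟨hxp, hpy⟩
  have hQ : JointSame P Q (2 * x + 1) (2 * y + 1) := ⟨x, y, Or.inr ⟨rfl, rfl, hxy⟩⟩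
  have hP : JointSame P Q (2 * p) (2 * q) := ⟨p, q, Or.inl ⟨rfl, rfl, hpq⟩⟩
  have hP' : JointSame P Q (2 * q) (2 * p) := ⟨q, p, Or.inl ⟨rfl, rfl, hpq.symm⟩⟩
  refine ⟨lt_of_not_ge fun hqx => h ⟨2 * q, 2 * x + 1, 2 * p, 2 * y + 1, ?_⟩,
    le_of_not_gt fun hyq => h ⟨2 * x + 1, 2 * p, 2 * y + 1, 2 * q, ?_⟩⟩
  · exact ⟨by omega, by omega, by omega, hP', hQ, fun hs => by have := hs.mod_two_eq_s14; omega⟩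
  · exact ⟨by omega, by omega, by omega, hQ, hP, fun hs => by have := hs.mod_two_eq_s14; omega⟩

lemma jointNoncrossing_of_isUnionOfParts (hP : IsNoncrossing P) (hQ : IsNoncrossing Q)
    (h : ∀ x y, Q.part x = Q.part y → P.IsUnionOfParts (Set.uIoc x y)) :
    JointNoncrossing P Q := by
  rintro ⟨a, b, c, d, hab, hbc, hcd, ⟨i, j, ⟨rfl, rfl, hij⟩ | ⟨rfl, rfl, hij⟩⟩,
    ⟨p, q, ⟨rfl, rfl, hpq⟩ | ⟨rfl, rfl, hpq⟩⟩, hnot⟩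
  · exact hP ⟨i, p, j, q, by omega, by omega, by omega, hij, hpq,
      fun hip => hnot ⟨i, p, Or.inl ⟨rfl, rfl, hip⟩⟩⟩
  · have := (h p q hpq).mem_iff hij
    simp only [Set.mem_uIoc] at this
    omega
  · have := (h i j hij).mem_iff hpq
    simp only [Set.mem_uIoc] at this
    omega
  · exact hQ ⟨i, p, j, q, by omega, by omega, by omega, hij, hpq,
      fun hip => hnot ⟨i, p, Or.inr ⟨rfl, rfl, hip⟩⟩⟩

lemma isNoncrossing_kerPartition_update (x y : Fin n) :
    IsNoncrossing (kerPartition (Function.update id y x)) := by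
  rintro ⟨a, b, c, d, hab, hbc, hcd, hac, hbd, -⟩
  rcases Function.update_id_eq_update_id (part_kerPartition_eq_iff.1 hac) with hac | ⟨ha, hc⟩
  · exact (hab.trans hbc).ne hac
  rcases Function.update_id_eq_update_id (part_kerPartition_eq_iff.1 hbd) with hbd | ⟨hb, -⟩
  · exact (hbc.trans hcd).ne hbd
  omega

lemma isUnionOfParts_uIoc_kerPartition_update {x y : Fin n}
    (h : P.IsUnionOfParts (Set.uIoc x y)) (u v : Fin n)
    (huv : (kerPartition (Function.update id y x)).part u =
      (kerPartition (Function.update id y x)).part v) :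
    P.IsUnionOfParts (Set.uIoc u v) := by
  have hempty (w : Fin n) : P.IsUnionOfParts (Set.uIoc w w) := fun a _ _ ha => by
    simp only [Set.mem_uIoc] at ha
    omega
  rcases Function.update_id_eq_update_id (part_kerPartition_eq_iff.1 huv) with
    rfl | ⟨hu | hu, hv | hv⟩
  · exact hempty u
  · exact hu ▸ hv ▸ hempty x
  · exact hu ▸ hv ▸ h
  · exact hu ▸ hv ▸ Set.uIoc_comm x y ▸ h
  · exact hu ▸ hv ▸ hempty y

variable {k : NCP n → NCP n}

theorem IsKreweras.part_eq_iff_s14 (hk : IsKreweras k) (P : NCP n) {x y : Fin n} :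
    (k P).1.part x = (k P).1.part y ↔ P.1.IsUnionOfParts (Set.uIoc x y) := by
  refine ⟨isUnionOfParts_uIoc_of_jointNoncrossing (hk P).1, fun h => ?_⟩
  -- the partition whose only block with more than one element is `{x, y}`
  let Q : NCP n := ⟨kerPartition (Function.update id y x), isNoncrossing_kerPartition_update x y⟩
  refine part_eq_part_of_le_s14 ((hk P).2 Q (jointNoncrossing_of_isUnionOfParts P.2 Q.2
    (isUnionOfParts_uIoc_kerPartition_update h))) (part_kerPartition_eq_iff.2 ?_)
  simp [Function.update_apply]

theorem IsKreweras.cyclicSucc_eq (hk : IsKreweras k) (P : NCP n) {i u : Fin n}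
    (hu : finRotate n u = P.1.cyclicSucc i) : (k P).1.cyclicSucc u = i := by
  set j := P.1.cyclicSucc i
  have hmemK {x z : Fin n} : x ∈ (k P).1.part z ↔ P.1.IsUnionOfParts (Set.uIoc x z) :=
    mem_part_iff_part_eq.trans (hk.part_eq_iff_s14 P)
  have hsep {x : Fin n} (hx : x ∈ (k P).1.part u) :
      (x < i ∧ i ≤ u ∨ u < i ∧ i ≤ x) ↔ (x < j ∧ j ≤ u ∨ u < j ∧ j ≤ x) := by
    simpa only [Set.mem_uIoc] using (hmemK.1 hx).mem_iff (P.1.part_cyclicSucc (i := i)).symm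
  have hju : (u : ℕ) + 1 = n ∧ (j : ℕ) = 0 ∨ (j : ℕ) = u + 1 := by
    have := hu ▸ val_finRotate u
    split_ifs at this <;> omega
  -- `(i, u]` is the gap `(i, j)` in the block of `i`, or else the span `[j, i]` of that block
  -- or (when `j = 0`) its complement
  by_cases h : i < j
  · refine (k P).1.cyclicSucc_eq_of_le (hmemK.2 ?_) fun x hx => by have := hsep hx; omega
    convert P.2.isUnionOfParts_Ioo_cyclicSucc i using 2
    ext z
    simp only [Set.mem_uIoc, Set.mem_Ioo]
    omega
  have hIcc := P.2.isUnionOfParts_Icc_cyclicSucc h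
  rcases Nat.eq_zero_or_pos j with hj | hj
  · refine (k P).1.cyclicSucc_eq_of_le (hmemK.2 ?_) fun x hx => by have := hsep hx; omega
    convert hIcc.compl using 2
    ext z
    simp only [Set.mem_uIoc, Set.mem_compl_iff, Set.mem_Icc]
    omega
  · refine (k P).1.cyclicSucc_eq_of_lt (hmemK.2 ?_) (by omega)
      fun x hx hux => by have := hsep hx; omega
    convert hIcc using 2
    ext z
    simp only [Set.mem_uIoc, Set.mem_Icc]
    omega

theorem IsKreweras.toMatching_eq (hk : IsKreweras k) (P : NCP n) :
    (k P).1.toMatching = phi n P.1.toMatching := by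
  let e : Fin n ≃ Fin n :=
    (Equiv.ofBijective _ P.1.cyclicSucc_bijective).trans (finRotate n).symm
  have he (i : Fin n) : finRotate n (e i) = P.1.cyclicSucc i := (finRotate n).apply_symm_apply _
  have hreindex : (k P).1.toMatching = univ.image ((k P).1.arcOf ∘ e) := by
    rw [← image_image, image_univ_equiv]
    rfl
  rw [hreindex, phi_eq_image P.1.isMatching_toMatching.1, toMatching, image_image]
  refine image_congr fun i _ => ?_
  have hval := val_finRotate (e i)
  rw [he] at hval
  simp only [Function.comp, arcOf, arc_map, hk.cyclicSucc_eq P (he i),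
    arc_comm (2 * (e i : ℕ) + 2)]
  simp only [arc, rotatePoint, Prod.ext_iff]
  split_ifs at hval ⊢ <;> omega

lemma ncMatchingEquiv_iterate (hk : IsKreweras k) (c : ℕ) (P : NCP n) :
    (ncMatchingEquiv n (k^[c] P)).1 = (phi n)^[c] (ncMatchingEquiv n P).1 :=
  Function.Semiconj.iterate_right (f := fun P => (ncMatchingEquiv n P).1) hk.toMatching_eq c P

end Kreweras

/-- The total number of orbits of `NC(n)` under Kreweras complementation equals
the number of unrooted planar trees with `n` edges, i.e. the number of orbits
of noncrossing perfect matchings on `2n` circularly arranged points under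
rotation. -/
theorem card_kreweras_orbits (n : ℕ) (k : NCP n → NCP n) (hk : IsKreweras k) :
    Nat.card (Quot fun P Q : NCP n => ∃ c : ℕ, k^[c] P = Q) =
      Nat.card (Quot fun M M' : {M : Finset (ℕ × ℕ) // IsNoncrossingMatching n M} =>
        ∃ c : ℕ, (phi n)^[c] M.1 = M'.1) := by
  refine Nat.card_congr (Quot.congr (ncMatchingEquiv n) fun P Q => ?_)
  simp only [← ncMatchingEquiv_iterate hk, ← Subtype.ext_iff, (ncMatchingEquiv n).injective.eq_iff]
end
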